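/- arXiv:2107.13611 — 6 statements merged into one kernel-verified Lean document; each statement's English description precedes it below -/
import Mathlib

section
/- Let q be a prime power, let r ≥ 1 be an integer, and let f : F_q^{r×r} → F_q be an F_q-linear map that takes the same value on every invertible matrix in GL_r(F_q). If r > 1 or q ≠ 2, then f is the zero map. -/
/-!
Write `E i j c` for the matrix with the single entry `c` at `(i, j)`. For `i ≠ j` the
transvection `1 + E i j c` is invertible, so a linear form taking the same value on all invertible
matrices kills `E i j c`. If there is a second index `j ≠ i`, expanding the invertible product
`(1 + E i j c) * (1 + E j i 1) = 1 + E i j c + E j i 1 + E i i c` shows that it also kills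
`E i i c`. If there is no second index, all matrices are scalar, and a scalar `a ∉ {0, 1}` gives
`f 1 = f (a • 1) = a • f 1`, hence `f 1 = 0`.
-/

namespace Matrix

section CommRing

variable {n R V : Type*} [Fintype n] [DecidableEq n] [CommRing R] [AddCommGroup V] [Module R V]
  {f : Matrix n n R →ₗ[R] V}

theorem isUnit_transvection {i j : n} (h : i ≠ j) (c : R) : IsUnit (transvection i j c) := by
  rw [isUnit_iff_isUnit_det, det_transvection_of_ne i j h]
  exact isUnit_one

theorem transvection_mul_transvection_swap (i j : n) (c : R) :
    transvection i j c * transvection j i 1 =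
      1 + single i j c + single j i 1 + single i i c := by
  simp only [transvection, Matrix.add_mul, Matrix.mul_add, Matrix.one_mul,
    single_mul_single_same, mul_one]
  abel

theorem map_single_eq_zero_of_ne (hf : ∀ M, IsUnit M → f M = f 1) {i j : n} (h : i ≠ j)
    (c : R) : f (single i j c) = 0 := by
  have := hf _ (isUnit_transvection h c)
  rwa [transvection, map_add, add_eq_left] at this

theorem map_single_self_eq_zero (hf : ∀ M, IsUnit M → f M = f 1) {i j : n} (h : i ≠ j)
    (c : R) : f (single i i c) = 0 := by
  have := hf _ ((isUnit_transvection h c).mul (isUnit_transvection h.symm 1))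
  rwa [transvection_mul_transvection_swap, map_add, map_add, map_add,
    map_single_eq_zero_of_ne hf h, map_single_eq_zero_of_ne hf h.symm, add_zero, add_zero,
    add_eq_left] at this

end CommRing

theorem single_self_eq_smul_one {n R : Type*} [DecidableEq n] [Subsingleton n] [Semiring R]
    (i : n) (c : R) : single i i c = c • (1 : Matrix n n R) := by
  ext a b
  rw [Subsingleton.elim a i, Subsingleton.elim b i]
  simp

section Field

variable {n K V : Type*} [Fintype n] [DecidableEq n] [Field K] [AddCommGroup V] [Module K V]
  {f : Matrix n n K →ₗ[K] V}

theorem map_one_eq_zero_of_ne_zero_of_ne_one (hf : ∀ M, IsUnit M → f M = f 1) {a : K}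
    (ha₀ : a ≠ 0) (ha₁ : a ≠ 1) : f 1 = 0 := by
  have hunit : IsUnit (a • (1 : Matrix n n K)) := by
    rw [← Algebra.algebraMap_eq_smul_one]
    exact (Ne.isUnit ha₀).map _
  have hsub : (a - 1) • f 1 = 0 := by rw [sub_smul, one_smul, ← map_smul, hf _ hunit, sub_self]
  exact (smul_eq_zero.mp hsub).resolve_left (sub_ne_zero.mpr ha₁)

theorem linearMap_eq_zero_of_forall_isUnit_map_eq_map_one (hf : ∀ M, IsUnit M → f M = f 1)
    (h : Nontrivial n ∨ ∃ a : K, a ≠ 0 ∧ a ≠ 1) : f = 0 := by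
  refine ext_linearMap _ fun i j => LinearMap.ext fun c => ?_
  change f (single i j c) = 0
  obtain hij | rfl := ne_or_eq i j
  · exact map_single_eq_zero_of_ne hf hij c
  rcases subsingleton_or_nontrivial n with hn | hn
  · obtain ⟨a, ha₀, ha₁⟩ := h.resolve_left (not_nontrivial_iff_subsingleton.mpr hn)
    rw [single_self_eq_smul_one, map_smul, map_one_eq_zero_of_ne_zero_of_ne_one hf ha₀ ha₁,
      smul_zero]
  · obtain ⟨j, hj⟩ := exists_ne i
    exact map_single_self_eq_zero hf hj.symm c

end Field

end Matrix

theorem exists_ne_zero_ne_one_of_two_lt_card {K : Type*} [Zero K] [One K] [Fintype K]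
    (h : 2 < Fintype.card K) : ∃ a : K, a ≠ 0 ∧ a ≠ 1 := by
  classical
  have hcard : ({0, 1} : Finset K).card < (Finset.univ : Finset K).card :=
    (Finset.card_le_two (a := (0 : K)) (b := 1)).trans_lt (by rwa [Finset.card_univ])
  obtain ⟨a, -, ha⟩ := Finset.exists_mem_notMem_of_card_lt_card hcard
  exact ⟨a, by simpa [not_or] using ha⟩

theorem statement2_general (q : ℕ)
    (F : Type) [Field F] [Fintype F] (hF : Fintype.card F = q)
    (r : ℕ)
    (f : Matrix (Fin r) (Fin r) F →ₗ[F] F)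
    (hconst : ∀ M N : Matrix (Fin r) (Fin r) F, IsUnit M → IsUnit N → f M = f N)
    (h : 1 < r ∨ q ≠ 2) :
    f = 0 := by
  refine Matrix.linearMap_eq_zero_of_forall_isUnit_map_eq_map_one
    (fun M hM => hconst M 1 hM isUnit_one) ?_
  refine h.imp Fin.nontrivial_iff_two_le.mpr fun hq => exists_ne_zero_ne_one_of_two_lt_card ?_
  have := Fintype.one_lt_card (α := F)
  omega

/-- A linear form on `r × r` matrices over `F_q` that is constant on all
invertible matrices is the zero form, provided `r > 1` or `q ≠ 2`. -/
theorem statement2 (q : ℕ) (hq : IsPrimePow q)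
    (F : Type) [Field F] [Fintype F] (hF : Fintype.card F = q)
    (r : ℕ) (hr : 1 ≤ r)
    (f : Matrix (Fin r) (Fin r) F →ₗ[F] F)
    (hconst : ∀ M N : Matrix (Fin r) (Fin r) F, IsUnit M → IsUnit N → f M = f N)
    (h : 1 < r ∨ q ≠ 2) :
    f = 0 :=
  statement2_general q F hF r f hconst h
end

section
/- (Anticode Bound for the sum-rank metric.) Let 𝒞 ⊆ 𝕄 be an F_q-linear subspace. Then dim(𝒞) ≤ max_{C ∈ 𝒞} ∑_{i=1}^ℓ m_i·rk(C_i). In particular, if m_1 = … = m_ℓ = m, then dim(𝒞) ≤ m·maxsrk(𝒞). -/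
/-!
The anticode bound is reduced, one block at a time, to an affine form of Meshulam's bound for
spaces of bounded rank: if `dim V ≤ dim W` and `f : V → W` has maximal rank `r` on the coset
`f + S`, then `dim S ≤ r · dim W`. Projecting `𝒞` onto one block and choosing there a shift of
maximal rank, the kernel of the projection is treated by induction, with the chosen element
added to the shift.

For the affine bound write `V = ker f ⊕ P` and `W = range f ⊕ U`. The maps `E ∈ S` are filtered
by their block `P → W/U` (at most `r²` dimensions); for those with `E(P) ⊆ U`, by their block
`P → W/range f`, which vanishes on the common kernel `K ⊆ P` of all of them (at most
`(r - dim K)(dim W - r)` dimensions); the rest vanish on `P` and map `ker f` into `f(K)` (at most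
`(dim V - r) dim K` dimensions). Maximality of the rank of `f` is what forces `E(ker f) ⊆ f(K)`:
adding such an `E` to `f + E'` cannot enlarge the range, which is already spanned by the image of `P`.
-/

open Matrix

/-- The sum-rank weight of a tuple of matrices. -/
noncomputable def srk {F : Type} [Field F] {ℓ : ℕ} {m n : Fin ℓ → ℕ}
    (C : ∀ i, Matrix (Fin (m i)) (Fin (n i)) F) : ℕ :=
  ∑ i, (C i).rank

/-- The maximum sum-rank weight of a linear sum-rank metric code. -/
noncomputable def maxsrk {F : Type} [Field F] {ℓ : ℕ} {m n : Fin ℓ → ℕ}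
    (𝒞 : Submodule F (∀ i, Matrix (Fin (m i)) (Fin (n i)) F)) : ℕ :=
  sSup {k | ∃ C ∈ 𝒞, srk C = k}

open Module LinearMap Submodule

section

variable {F V W : Type*} [Field F] [AddCommGroup V] [Module F V] [AddCommGroup W] [Module F W]
  {f : V →ₗ[F] W} {S : Submodule F (V →ₗ[F] W)} {P : Submodule F V} {U : Submodule F W}

def restrictMod (P : Submodule F V) (U : Submodule F W) :
    (V →ₗ[F] W) →ₗ[F] (P →ₗ[F] W ⧸ U) :=
  LinearMap.compRight F U.mkQ ∘ₗ LinearMap.domRestrict' P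

theorem mem_ker_restrictMod {E : V →ₗ[F] W} :
    E ∈ ker (restrictMod P U) ↔ ∀ x ∈ P, E x ∈ U := by
  simp [restrictMod, LinearMap.ext_iff]

theorem Submodule.map_eq_range_of_isCompl_ker (hP : IsCompl (ker f) P) : P.map f = range f := by
  have hker : (ker f).map f = ⊥ := by rw [eq_bot_iff, map_le_iff_le_comap, comap_bot]
  rw [← map_top, ← hP.sup_eq_top, map_sup, hker, bot_sup_eq]

theorem Submodule.finrank_map_eq_of_disjoint_ker (h : Disjoint P (ker f)) :
    finrank F (P.map f) = finrank F P := by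
  rw [← range_domRestrict, finrank_range_of_inj]
  rwa [← ker_eq_bot, ker_domRestrict, ← disjoint_iff_comap_eq_bot]

theorem disjoint_ker_add (hP : IsCompl (ker f) P) (hU : IsCompl (range f) U)
    {E : V →ₗ[F] W} (hEP : ∀ x ∈ P, E x ∈ U) : Disjoint P (ker (f + E)) := by
  rw [disjoint_ker]
  intro x hx hx0
  have hfx : f x = -E x := eq_neg_of_add_eq_zero_left hx0
  have hfx0 : f x = 0 :=
    disjoint_def.1 hU.disjoint _ (mem_range_self f x) (hfx ▸ U.neg_mem (hEP x hx))
  exact disjoint_def.1 hP.disjoint x hfx0 hx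

variable [FiniteDimensional F V]

theorem Submodule.finrank_eq_finrank_map_add_finrank_inf_ker (f : V →ₗ[F] W) (P : Submodule F V) :
    finrank F P = finrank F (P.map f) + finrank F ↥(P ⊓ ker f) := by
  have h := finrank_range_add_finrank_ker (f.domRestrict P)
  rw [range_domRestrict, ker_domRestrict] at h
  rw [← h, ← finrank_map_subtype_eq, map_comap_subtype]

theorem range_le_range_of_forall_apply_eq_zero (hP : IsCompl (ker f) P)
    (hmax : ∀ E ∈ S, finrank F (range (f + E)) ≤ finrank F (range f))
    {E : V →ₗ[F] W} (hE : E ∈ S) (hEP : ∀ x ∈ P, E x = 0) : range E ≤ range f := by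
  have hle : range f ≤ range (f + E) := by
    rw [← map_eq_range_of_isCompl_ker hP]
    rintro _ ⟨x, hx, rfl⟩
    exact ⟨x, by simp [hEP x hx]⟩
  have heq := eq_of_le_of_finrank_le hle (hmax E hE)
  rintro _ ⟨v, rfl⟩
  have hv : E v = (f + E) v - f v := by simp
  rw [hv]
  exact sub_mem (heq ▸ mem_range_self _ v) (mem_range_self f v)

theorem map_eq_range_add (hP : IsCompl (ker f) P) (hU : IsCompl (range f) U)
    (hmax : ∀ E ∈ S, finrank F (range (f + E)) ≤ finrank F (range f))
    {E : V →ₗ[F] W} (hE : E ∈ S) (hEP : ∀ x ∈ P, E x ∈ U) : P.map (f + E) = range (f + E) := by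
  refine eq_of_le_of_finrank_le (map_le_range) ?_
  rw [finrank_map_eq_of_disjoint_ker (disjoint_ker_add hP hU hEP),
    ← finrank_map_eq_of_disjoint_ker hP.disjoint.symm, map_eq_range_of_isCompl_ker hP]
  exact hmax E hE

theorem apply_eq_zero_of_apply_mem_range (hP : IsCompl (ker f) P) (hU : IsCompl (range f) U)
    (hmax : ∀ E ∈ S, finrank F (range (f + E)) ≤ finrank F (range f))
    {E₁ E : V →ₗ[F] W} (hE₁ : E₁ ∈ S) (hE₁P : ∀ x ∈ P, E₁ x = 0) (hE : E ∈ S)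
    (hEP : ∀ x ∈ P, E x ∈ U) {p : V} (hp : p ∈ P) (hfp : f p ∈ range E₁) : E p = 0 := by
  have hE₁EP : ∀ x ∈ P, (E₁ + E) x ∈ U := fun x hx ↦ by simpa [hE₁P x hx] using hEP x hx
  have hranges : range (f + (E₁ + E)) = range (f + E) := by
    rw [← map_eq_range_add hP hU hmax (S.add_mem hE₁ hE) hE₁EP, ← map_eq_range_add hP hU hmax hE hEP]
    ext y
    simp only [mem_map]
    constructor <;> rintro ⟨x, hx, rfl⟩ <;> exact ⟨x, hx, by simp [hE₁P x hx]⟩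
  obtain ⟨u, hu⟩ := hfp
  have hfp : f p ∈ P.map (f + E) := by
    have : E₁ u = (f + (E₁ + E)) u - (f + E) u := by simp
    rw [map_eq_range_add hP hU hmax hE hEP, ← hu, this]
    exact sub_mem (hranges ▸ mem_range_self _ u) (mem_range_self _ u)
  obtain ⟨x, hx, hfx⟩ := hfp
  have hEx : E x = 0 := by
    have : E x = f (p - x) := by rw [map_sub, ← hfx]; simp
    exact disjoint_def.1 hU.disjoint _ (this ▸ mem_range_self f _) (hEP x hx)
  have hxp : x = p := by
    have : f (p - x) = 0 := by rw [map_sub, ← hfx]; simp [hEx]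
    exact (sub_eq_zero.1 (disjoint_def.1 hP.disjoint _ this (sub_mem hp hx))).symm
  rw [← hxp, hEx]

variable [FiniteDimensional F W]

theorem Submodule.finrank_add_mul_le_of_forall_apply_eq_zero {K : Submodule F V} (hS : ∀ g ∈ S, ∀ x ∈ K, g x = 0) :
    finrank F S + finrank F K * finrank F W ≤ finrank F V * finrank F W := by
  set ρ : (V →ₗ[F] W) →ₗ[F] (K →ₗ[F] W) := LinearMap.domRestrict' K
  have hρ : range ρ = ⊤ := range_eq_top.2 fun g ↦ LinearMap.exists_extend g
  have hSρ : S ≤ ker ρ := fun g hg ↦ by ext x; exact hS g hg x x.2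
  have := finrank_range_add_finrank_ker ρ
  rw [hρ, finrank_top, finrank_linearMap, finrank_linearMap] at this
  have := Submodule.finrank_mono hSρ
  omega

theorem Submodule.finrank_le_mul_of_forall_apply_mem {T : Submodule F W} (hS : ∀ g ∈ S, ∀ x, g x ∈ T) :
    finrank F S ≤ finrank F V * finrank F T := by
  have hST : S ≤ range (LinearMap.compRight F T.subtype : (V →ₗ[F] T) →ₗ[F] V →ₗ[F] W) :=
    fun g hg ↦ ⟨g.codRestrict T (hS g hg), rfl⟩
  calc finrank F S ≤ finrank F (V →ₗ[F] T) := (Submodule.finrank_mono hST).trans (finrank_range_le _)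
    _ = _ := finrank_linearMap F F V T

theorem Submodule.finrank_le_mul_of_isCompl_of_forall_apply_eq_zero {N : Submodule F V}
    (hNP : IsCompl N P) {T : Submodule F W}
    (hSP : ∀ E ∈ S, ∀ x ∈ P, E x = 0) (hST : ∀ E ∈ S, range E ≤ T) :
    finrank F S ≤ finrank F N * finrank F T := by
  have hinj : S ⊓ ker (LinearMap.domRestrict' N) = ⊥ := by
    refine eq_bot_iff.2 fun E ⟨hE, hEN⟩ ↦ ?_
    have hEN : ∀ x ∈ N, E x = 0 := fun x hx ↦ LinearMap.congr_fun (mem_ker.1 hEN) ⟨x, hx⟩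
    have hE0 : E = 0 := by
      ext v
      obtain ⟨y, hy, z, hz, rfl⟩ := mem_sup.1 (hNP.sup_eq_top ▸ mem_top : v ∈ N ⊔ P)
      simp [hEN y hy, hSP E hE z hz]
    exact hE0 ▸ zero_mem _
  rw [finrank_eq_finrank_map_add_finrank_inf_ker (LinearMap.domRestrict' N), hinj, finrank_bot,
    add_zero]
  refine finrank_le_mul_of_forall_apply_mem ?_
  rintro _ ⟨E, hE, rfl⟩ x
  exact hST E hE (mem_range_self E x)

theorem finrank_le_mul_finrank_range_of_forall_finrank_range_add_le
    (hVW : finrank F V ≤ finrank F W)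
    (hmax : ∀ E ∈ S, finrank F (range (f + E)) ≤ finrank F (range f)) :
    finrank F S ≤ finrank F W * finrank F (range f) := by
  obtain ⟨P, hP⟩ := (ker f).exists_isCompl
  obtain ⟨U, hU⟩ := (range f).exists_isCompl
  set S₂ := S ⊓ ker (restrictMod P U)
  set S₁ := S₂ ⊓ ker (restrictMod P (range f))
  have hS₂ : ∀ E ∈ S₂, E ∈ S ∧ ∀ x ∈ P, E x ∈ U := fun E hE ↦ ⟨hE.1, mem_ker_restrictMod.1 hE.2⟩
  have hS₁ : ∀ E ∈ S₁, E ∈ S ∧ ∀ x ∈ P, E x = 0 := fun E hE ↦ ⟨hE.1.1, fun x hx ↦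
    disjoint_def.1 hU.disjoint _ (mem_ker_restrictMod.1 hE.2 x hx) ((hS₂ E hE.1).2 x hx)⟩
  set K : Submodule F P := ⨅ E : S₂, ker ((E : V →ₗ[F] W).domRestrict P)
  have hK : ∀ x : P, x ∈ K ↔ ∀ E ∈ S₂, E x = 0 := by simp [K, mem_iInf]
  have hfP : finrank F P = finrank F (range f) := by
    rw [← finrank_map_eq_of_disjoint_ker hP.disjoint.symm, map_eq_range_of_isCompl_ker hP]
  have hα : finrank F (S.map (restrictMod P U)) ≤ finrank F (range f) * finrank F (range f) := by
    refine (finrank_le _).trans_eq ?_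
    rw [finrank_linearMap, hfP, (quotientEquivOfIsCompl U (range f) hU.symm).finrank_eq]
  have hβ : finrank F (S₂.map (restrictMod P (range f))) + finrank F K * finrank F (W ⧸ range f)
      ≤ finrank F (range f) * finrank F (W ⧸ range f) := by
    refine hfP ▸ finrank_add_mul_le_of_forall_apply_eq_zero ?_
    rintro _ ⟨E, hE, rfl⟩ x hx
    simp [restrictMod, (hK x).1 hx E hE]
  have hγ : finrank F S₁ ≤ finrank F (ker f) * finrank F K := by
    refine (finrank_le_mul_of_isCompl_of_forall_apply_eq_zero hP (fun E hE ↦ (hS₁ E hE).2)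
      (T := K.map (f ∘ₗ P.subtype)) ?_).trans (Nat.mul_le_mul_left _ (finrank_map_le _ _))
    rintro E₁ hE₁ _ ⟨u, rfl⟩
    obtain ⟨p, hp, hfp⟩ := (map_eq_range_of_isCompl_ker hP).symm ▸
      range_le_range_of_forall_apply_eq_zero hP hmax (hS₁ E₁ hE₁).1 (hS₁ E₁ hE₁).2 (mem_range_self E₁ u)
    refine ⟨⟨p, hp⟩, (hK _).2 fun E hE ↦ ?_, hfp⟩
    exact apply_eq_zero_of_apply_mem_range hP hU hmax (hS₁ E₁ hE₁).1 (hS₁ E₁ hE₁).2 (hS₂ E hE).1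
      (hS₂ E hE).2 hp (hfp ▸ mem_range_self E₁ u)
  have h₁ := finrank_eq_finrank_map_add_finrank_inf_ker (restrictMod P U) S
  have h₂ := finrank_eq_finrank_map_add_finrank_inf_ker (restrictMod P (range f)) S₂
  have hn := finrank_range_add_finrank_ker f
  have hm := finrank_quotient_add_finrank (range f)
  have hkerf : finrank F (ker f) * finrank F K ≤ finrank F (W ⧸ range f) * finrank F K :=
    Nat.mul_le_mul_right _ (by omega)
  rw [← hm]
  linarith

theorem exists_mem_finrank_le_mul_finrank_range_add (hVW : finrank F V ≤ finrank F W)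
    (A : V →ₗ[F] W) (S : Submodule F (V →ₗ[F] W)) :
    ∃ D ∈ S, finrank F S ≤ finrank F W * finrank F (range (A + D)) := by
  set ranks : Set ℕ := {k | ∃ D ∈ S, finrank F (range (A + D)) = k}
  have hbdd : BddAbove ranks := ⟨finrank F V, by rintro _ ⟨D, -, rfl⟩; exact finrank_range_le _⟩
  obtain ⟨D, hD, hDmax⟩ := Nat.sSup_mem (⟨_, 0, S.zero_mem, rfl⟩ : ranks.Nonempty) hbdd
  refine ⟨D, hD, finrank_le_mul_finrank_range_of_forall_finrank_range_add_le hVW fun E hE ↦ ?_⟩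
  rw [add_assoc, hDmax]
  exact le_csSup hbdd ⟨D + E, S.add_mem hD hE, rfl⟩

end

theorem Matrix.exists_mem_finrank_le_mul_rank_add {F m n : Type*} [Field F] [Fintype m] [Fintype n]
    (hnm : Fintype.card n ≤ Fintype.card m) (A : Matrix m n F) (S : Submodule F (Matrix m n F)) :
    ∃ D ∈ S, finrank F S ≤ Fintype.card m * (A + D).rank := by
  classical
  obtain ⟨_, ⟨D, hD, rfl⟩, hle⟩ := exists_mem_finrank_le_mul_finrank_range_add
    (by simpa using hnm) (toLin' A) (S.map (toLin' : Matrix m n F ≃ₗ[F] _).toLinearMap)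
  refine ⟨D, hD, ?_⟩
  rwa [LinearEquiv.finrank_map_eq, LinearEquiv.coe_coe, ← map_add, finrank_fintype_fun_eq_card] at hle

theorem exists_mem_finrank_le_sum_mul_rank_add {F ι : Type*} [Field F] [Fintype ι] [DecidableEq ι]
    {m n : ι → ℕ} (hnm : ∀ i, n i ≤ m i) (s : Finset ι) (A : ∀ i, Matrix (Fin (m i)) (Fin (n i)) F)
    (𝒞 : Submodule F (∀ i, Matrix (Fin (m i)) (Fin (n i)) F)) (h𝒞 : ∀ C ∈ 𝒞, ∀ i ∉ s, C i = 0) :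
    ∃ C ∈ 𝒞, finrank F 𝒞 ≤ ∑ i ∈ s, m i * (A i + C i).rank := by
  induction s using Finset.induction_on generalizing A 𝒞 with
  | empty =>
    have : 𝒞 = ⊥ := eq_bot_iff.2 fun C hC ↦ funext fun i ↦ h𝒞 C hC i (Finset.notMem_empty i)
    exact ⟨0, 𝒞.zero_mem, by simp [this]⟩
  | @insert j s hj ih =>
    let π := LinearMap.proj (R := F) (φ := fun i ↦ Matrix (Fin (m i)) (Fin (n i)) F) j
    obtain ⟨_, ⟨D, hD, rfl⟩, hDle⟩ :=
      Matrix.exists_mem_finrank_le_mul_rank_add (by simpa using hnm j) (A j) (𝒞.map π)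
    obtain ⟨E, ⟨hE, hEj : E j = 0⟩, hEle⟩ := ih (A + D) (𝒞 ⊓ ker π) fun C ⟨hC, hCj⟩ i hi ↦ by
      by_cases hij : i = j
      · exact hij ▸ hCj
      · exact h𝒞 C hC i (by simp [hij, hi])
    refine ⟨D + E, 𝒞.add_mem hD hE, ?_⟩
    rw [finrank_eq_finrank_map_add_finrank_inf_ker π, Finset.sum_insert hj]
    simp only [Fintype.card_fin, Pi.add_apply, add_assoc] at hDle hEle ⊢
    rw [hEj, add_zero]
    exact add_le_add hDle hEle

theorem exists_mem_finrank_le_sum_mul_rank {F ι : Type*} [Field F] [Fintype ι] [DecidableEq ι]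
    {m n : ι → ℕ} (hnm : ∀ i, n i ≤ m i) (𝒞 : Submodule F (∀ i, Matrix (Fin (m i)) (Fin (n i)) F)) :
    ∃ C ∈ 𝒞, finrank F 𝒞 ≤ ∑ i, m i * (C i).rank := by
  simpa using exists_mem_finrank_le_sum_mul_rank_add hnm Finset.univ 0 𝒞 (by simp)

theorem statement3_general (F : Type) [Field F]
    (ℓ : ℕ) (m n : Fin ℓ → ℕ)
    (hnm : ∀ i, n i ≤ m i)
    (𝒞 : Submodule F (∀ i, Matrix (Fin (m i)) (Fin (n i)) F)) :
    Module.finrank F 𝒞 ≤ sSup {k | ∃ C ∈ 𝒞, ∑ i, m i * (C i).rank = k} ∧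
    ∀ m₀ : ℕ, (∀ i, m i = m₀) → Module.finrank F 𝒞 ≤ m₀ * maxsrk 𝒞 := by
  obtain ⟨C, hC, hle⟩ := exists_mem_finrank_le_sum_mul_rank hnm 𝒞
  refine ⟨hle.trans (le_csSup ⟨∑ i, m i * n i, ?_⟩ ⟨C, hC, rfl⟩), fun m₀ hm₀ ↦ ?_⟩
  · rintro _ ⟨C', -, rfl⟩
    exact Finset.sum_le_sum fun i _ ↦ Nat.mul_le_mul_left _ (rank_le_width _)
  · have hsrk : srk C ≤ maxsrk 𝒞 := by
      refine le_csSup ⟨∑ i, n i, ?_⟩ ⟨C, hC, rfl⟩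
      rintro _ ⟨C', -, rfl⟩
      exact Finset.sum_le_sum fun i _ ↦ rank_le_width _
    calc finrank F 𝒞 ≤ ∑ i, m i * (C i).rank := hle
      _ = m₀ * srk C := by simp only [srk, Finset.mul_sum, hm₀]
      _ ≤ m₀ * maxsrk 𝒞 := Nat.mul_le_mul_left m₀ hsrk

/-- **Anticode Bound** for the sum-rank metric. -/
theorem statement3 (q : ℕ) (hq : IsPrimePow q)
    (F : Type) [Field F] [Fintype F] (hF : Fintype.card F = q)
    (ℓ : ℕ) (hℓ : 1 ≤ ℓ) (m n : Fin ℓ → ℕ)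
    (hm : ∀ i, 1 ≤ m i) (hn : ∀ i, 1 ≤ n i)
    (hmon : Antitone m) (hnm : ∀ i, n i ≤ m i)
    (𝒞 : Submodule F (∀ i, Matrix (Fin (m i)) (Fin (n i)) F)) :
    Module.finrank F 𝒞 ≤ sSup {k | ∃ C ∈ 𝒞, ∑ i, m i * (C i).rank = k} ∧
    ∀ m₀ : ℕ, (∀ i, m i = m₀) → Module.finrank F 𝒞 ≤ m₀ * maxsrk 𝒞 :=
  statement3_general F ℓ m n hnm 𝒞
end

section
/- Let m ≥ 2, m ≥ n ≥ 1, and let 𝒞 ⊆ F_2^{m×n} be an optimal rank-metric anticode with maxrk(𝒞) = t. Then every element of 𝒞 of rank t can be written as the sum of two elements of 𝒞 of rank t. -/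
/-!
Let `𝒟` be a Gabidulin code: an `m (n - t + 1)`-dimensional space of `m × n` matrices whose
nonzero elements have rank `≥ t`. As `m t + m (n - t + 1) = m n + m`, the space `W = 𝒞 ∩ 𝒟` has
dimension `≥ m`, and its nonzero elements have rank exactly `t`. If `rk (C - w) < t` for every
nonzero `w ∈ W`, the kernel of `C - w` would be at least `q` times larger than that of `w`; but
double counting gives `∑_{w ∈ W} |ker (C - w)| ≤ ∑_{w ∈ W} |ker w|`, which forces `dim W ≤ t`.
So for `t < m` some `w ∈ W` gives `C = w + (C - w)`. For `t = m = n` the anticode is the whole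
matrix space and `C` is invertible: take `w = C D₁⁻¹ D₂` for independent `D₁, D₂ ∈ 𝒟`.
-/

open Matrix

/-- The maximum rank of a linear rank-metric code. -/
noncomputable def maxrk {F : Type} [Field F] {a b : ℕ}
    (𝒜 : Submodule F (Matrix (Fin a) (Fin b) F)) : ℕ :=
  sSup {k | ∃ M ∈ 𝒜, M.rank = k}

open Module

section LinearizedPolynomial

open Polynomial

variable {L : Type*} [Field L] {d : ℕ}

noncomputable def linearizedPoly (q : ℕ) (a : Fin (d + 1) → L) : L[X] :=
  ∑ i : Fin (d + 1), monomial (q ^ (i : ℕ)) (a i)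

lemma coeff_linearizedPoly {q : ℕ} (hq : 1 < q) (a : Fin (d + 1) → L) (i : Fin (d + 1)) :
    (linearizedPoly q a).coeff (q ^ (i : ℕ)) = a i := by
  simp only [linearizedPoly, finsetSum_coeff, coeff_monomial]
  rw [Finset.sum_eq_single i]
  · simp
  · intro j _ hji
    simp [(Nat.pow_right_injective hq).ne (Fin.val_injective.ne hji)]
  · simp

lemma linearizedPoly_ne_zero {q : ℕ} (hq : 1 < q) {a : Fin (d + 1) → L} (ha : a ≠ 0) :
    linearizedPoly q a ≠ 0 := by
  obtain ⟨i, hi⟩ := Function.ne_iff.mp ha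
  intro h
  exact hi (by rw [← coeff_linearizedPoly hq a i, h, coeff_zero, Pi.zero_apply])

lemma natDegree_linearizedPoly_le {q : ℕ} (hq : 0 < q) (a : Fin (d + 1) → L) :
    (linearizedPoly q a).natDegree ≤ q ^ d := by
  refine natDegree_sum_le_of_forall_le _ _ fun i _ => (natDegree_monomial_le _).trans ?_
  exact Nat.pow_le_pow_right hq (Nat.lt_succ_iff.mp i.isLt)

variable (F : Type*) [Field F] [Fintype F] [Algebra F L]

noncomputable def linearizedMap (d : ℕ) : (Fin (d + 1) → L) →ₗ[F] L →ₗ[F] L :=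
  (Fintype.linearCombination L fun i : Fin (d + 1) =>
    ((FiniteField.frobeniusAlgHom F L) ^ (i : ℕ)).toLinearMap).restrictScalars F

lemma eval_linearizedPoly (a : Fin (d + 1) → L) (x : L) :
    (linearizedPoly (Fintype.card F) a).eval x = linearizedMap F d a x := by
  simp [linearizedPoly, linearizedMap, eval_finsetSum, Fintype.linearCombination_apply,
    FiniteField.coe_frobeniusAlgHom, pow_iterate]

lemma finrank_ker_linearizedMap_le [Finite L] {a : Fin (d + 1) → L} (ha : a ≠ 0) :
    finrank F (LinearMap.ker (linearizedMap F d a)) ≤ d := by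
  classical
  have hq : 1 < Fintype.card F := Fintype.one_lt_card
  set P := linearizedPoly (Fintype.card F) a
  have hker : (LinearMap.ker (linearizedMap F d a) : Set L) ⊆ (P.roots.toFinset : Set L) := by
    intro x hx
    simpa [P, mem_roots (linearizedPoly_ne_zero hq ha), eval_linearizedPoly] using hx
  have hcard : Fintype.card F ^ finrank F (LinearMap.ker (linearizedMap F d a)) ≤
      Fintype.card F ^ d := calc
    _ = Nat.card (LinearMap.ker (linearizedMap F d a)) := by
      rw [natCard_eq_pow_finrank (K := F), Nat.card_eq_fintype_card]
    _ ≤ P.roots.toFinset.card := by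
      simpa only [SetLike.coe_sort_coe, Nat.card_eq_fintype_card, Fintype.card_coe] using
        Nat.card_mono (Finset.finite_toSet _) hker
    _ ≤ P.natDegree := (Multiset.toFinset_card_le _).trans (card_roots' P)
    _ ≤ Fintype.card F ^ d := natDegree_linearizedPoly_le (by omega) a
  exact (Nat.pow_le_pow_iff_right hq).mp hcard

end LinearizedPolynomial

lemma sub_finrank_ker_le_rank_toMatrix_comp {F L : Type*} [Field F] [AddCommGroup L] [Module F L]
    [FiniteDimensional F L] {m n : ℕ} (b : Basis (Fin m) F L) (f : L →ₗ[F] L)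
    {ι : (Fin n → F) →ₗ[F] L} (hι : Function.Injective ι) :
    n - finrank F (LinearMap.ker f) ≤
      (LinearMap.toMatrix (Pi.basisFun F (Fin n)) b (f ∘ₗ ι)).rank := by
  have hrange := LinearMap.finrank_range_add_finrank_ker (f ∘ₗ ι)
  rw [finrank_fin_fun] at hrange
  have hker : finrank F (LinearMap.ker (f ∘ₗ ι)) ≤ finrank F (LinearMap.ker f) :=
    LinearMap.finrank_le_finrank_of_injective (f := ι.restrict fun _ hx => hx)
      fun _ _ h => Subtype.ext (hι (congrArg Subtype.val h))
  have hrank := (Matrix.rank_eq_finrank_range_toLin _ b (Pi.basisFun F (Fin n))).trans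
    (congrArg (fun g => finrank F (LinearMap.range g)) (Matrix.toLin_toMatrix _ b (f ∘ₗ ι)))
  omega

/-- Gabidulin's code: the maps `x ↦ ∑ i ≤ d, a i * x ^ q ^ i` on `𝔽_{q^m}`, restricted to an
`n`-dimensional subspace. -/
theorem exists_submodule_finrank_eq_forall_rank_ge (F : Type*) [Field F] [Finite F] {m n d : ℕ}
    (hd : d < n) (hnm : n ≤ m) :
    ∃ 𝒟 : Submodule F (Matrix (Fin m) (Fin n) F),
      finrank F 𝒟 = m * (d + 1) ∧ ∀ M ∈ 𝒟, M ≠ 0 → n - d ≤ M.rank := by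
  have := Fintype.ofFinite F
  obtain ⟨p, hp⟩ := CharP.exists F
  have := Fact.mk (CharP.char_is_prime F p)
  have := NeZero.of_pos (show 0 < m by omega)
  let L := FiniteField.Extension F p m
  have hL : finrank F L = m := FiniteField.finrank_extension F p m
  let b : Basis (Fin m) F L := Module.finBasisOfFinrankEq F L hL
  obtain ⟨ι, hι⟩ : ∃ ι : (Fin n → F) →ₗ[F] L, Function.Injective ι :=
    finrank_le_iff_exists_linearMap.mp (by simpa [hL] using hnm)
  let Ψ : (Fin (d + 1) → L) →ₗ[F] Matrix (Fin m) (Fin n) F :=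
    (LinearMap.toMatrix (Pi.basisFun F (Fin n)) b).toLinearMap ∘ₗ LinearMap.lcomp F L ι ∘ₗ
      linearizedMap F d
  have hrank : ∀ a, a ≠ 0 → n - d ≤ (Ψ a).rank := fun a ha =>
    (Nat.sub_le_sub_left (finrank_ker_linearizedMap_le F ha) n).trans
      (sub_finrank_ker_le_rank_toMatrix_comp b _ hι)
  have hΨ : Function.Injective Ψ := by
    refine (injective_iff_map_eq_zero Ψ).mpr fun a h => ?_
    by_contra ha
    have := hrank a ha
    rw [h, Matrix.rank_zero] at this
    omega
  refine ⟨LinearMap.range Ψ, ?_, ?_⟩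
  · rw [LinearMap.finrank_range_of_inj hΨ, finrank_pi_fintype]
    simp [hL, mul_comm]
  · rintro _ ⟨a, rfl⟩ h
    exact hrank a fun ha => h (by rw [ha, map_zero])

section Counting

open Finset

variable {F : Type*} [Field F] [Fintype F] {m n : ℕ}

lemma card_mulVec_eq_zero [DecidableEq F] (M : Matrix (Fin m) (Fin n) F) :
    #{x | M *ᵥ x = 0} = Fintype.card F ^ (n - M.rank) := by
  have hker := LinearMap.finrank_range_add_finrank_ker M.mulVecLin
  rw [finrank_fin_fun] at hker
  calc #{x | M *ᵥ x = 0} = Nat.card (LinearMap.ker M.mulVecLin) := by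
        rw [← Fintype.card_subtype, ← Nat.card_eq_fintype_card]; rfl
    _ = Fintype.card F ^ (n - M.rank) := by
        rw [natCard_eq_pow_finrank (K := F), Nat.card_eq_fintype_card, Matrix.rank]
        congr 1
        omega

/-- For each `x`, the `w ∈ W` with `w x = C x` form a fiber of the linear map `w ↦ w x`, hence
are at most as many as those with `w x = 0`. -/
lemma sum_card_mulVec_sub_eq_zero_le [DecidableEq F]
    (W : Submodule F (Matrix (Fin m) (Fin n) F)) [Fintype W] (C : Matrix (Fin m) (Fin n) F) :
    ∑ w : W, #{x | (C - w.1) *ᵥ x = 0} ≤ ∑ w : W, #{x | w.1 *ᵥ x = 0} := by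
  simp only [card_filter]
  rw [sum_comm, sum_comm (f := fun (w : W) x => if w.1 *ᵥ x = 0 then 1 else 0)]
  refine sum_le_sum fun x _ => ?_
  let f : W →+ (Fin m → F) := (Matrix.mulVec.addMonoidHomLeft x).comp W.subtype.toAddMonoidHom
  have hsub : ∀ w : W, (C - w.1) *ᵥ x = 0 ↔ f w = C *ᵥ x := fun w => by
    simp [f, Matrix.sub_mulVec, sub_eq_zero, eq_comm, Matrix.mulVec.addMonoidHomLeft]
  simp only [hsub, ← card_filter]
  by_cases hx : C *ᵥ x ∈ Set.range f
  · exact (AddMonoidHom.card_fiber_eq_of_mem_range f hx ⟨0, map_zero f⟩).le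
  · simp [filter_eq_empty_iff.mpr fun w _ hw => hx ⟨w, hw⟩]

theorem finrank_le_of_forall_rank_sub_lt (W : Submodule F (Matrix (Fin m) (Fin n) F))
    {C : Matrix (Fin m) (Fin n) F} {t : ℕ} (hC : C.rank = t)
    (hW : ∀ w ∈ W, w ≠ 0 → w.rank = t) (hCW : ∀ w ∈ W, w ≠ 0 → (C - w).rank < t) :
    finrank F W ≤ t := by
  classical
  set q := Fintype.card F
  have hq : 1 < q := Fintype.one_lt_card
  have htn : t ≤ n := hC ▸ C.rank_le_width
  set s := q ^ (n - t)
  set E := #(univ.erase (0 : W))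
  have hE : E + 1 = q ^ finrank F W := by
    rw [card_erase_add_one (mem_univ 0), card_univ, card_eq_pow_finrank (K := F) (V := W)]
  have hlower : s + E * (q * s) ≤ ∑ w : W, #{x | (C - w.1) *ᵥ x = 0} := by
    rw [← add_sum_erase univ _ (mem_univ 0)]
    refine add_le_add (by simp [card_mulVec_eq_zero, hC, s, q]) ?_
    refine (smul_eq_mul E _).symm.trans_le (card_nsmul_le_sum _ _ _ fun w hw => ?_)
    have hw0 : w.1 ≠ 0 := by simpa using ne_of_mem_erase hw
    have := hCW w w.2 hw0
    rw [card_mulVec_eq_zero, ← pow_succ']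
    exact Nat.pow_le_pow_right (by omega) (by omega)
  have hupper : ∑ w : W, #{x | w.1 *ᵥ x = 0} ≤ q ^ n + E * s := by
    rw [← add_sum_erase univ _ (mem_univ 0)]
    refine add_le_add (by simp [q]) ?_
    refine (sum_le_card_nsmul _ _ _ fun w hw => ?_).trans_eq (smul_eq_mul E _)
    have hw0 : w.1 ≠ 0 := by simpa using ne_of_mem_erase hw
    rw [card_mulVec_eq_zero, hW w w.2 hw0]
  have hsum := hlower.trans ((sum_card_mulVec_sub_eq_zero_le W C).trans hupper)
  have hqn : q ^ n = q ^ t * s := by rw [← pow_add]; congr 1; omega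
  have h2 : E * (2 * s) ≤ E * (q * s) := by gcongr; omega
  have key : q ^ finrank F W * s ≤ q ^ t * s := by rw [← hE]; nlinarith
  exact (Nat.pow_le_pow_iff_right hq).mp (Nat.le_of_mul_le_mul_right key (by positivity))

theorem exists_rank_sub_eq_of_lt_finrank_inf
    {𝒞 𝒟 : Submodule F (Matrix (Fin m) (Fin n) F)} {t : ℕ} (h𝒞 : ∀ M ∈ 𝒞, M.rank ≤ t)
    (h𝒟 : ∀ M ∈ 𝒟, M ≠ 0 → t ≤ M.rank)
    (hdim : t < finrank F ↥(𝒞 ⊓ 𝒟)) {C : Matrix (Fin m) (Fin n) F} (hC : C ∈ 𝒞)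
    (hCt : C.rank = t) :
    ∃ w ∈ 𝒞, w.rank = t ∧ (C - w).rank = t := by
  by_contra! h
  have hrank : ∀ w ∈ 𝒞 ⊓ 𝒟, w ≠ 0 → w.rank = t := fun w hw hw0 =>
    (h𝒞 w hw.1).antisymm (h𝒟 w hw.2 hw0)
  refine hdim.not_ge (finrank_le_of_forall_rank_sub_lt (𝒞 ⊓ 𝒟) hCt hrank fun w hw hw0 => ?_)
  exact (h𝒞 _ (𝒞.sub_mem hC hw.1)).lt_of_ne (h w hw.1 (hrank w hw hw0))

end Counting

section Square

variable {K : Type*} [Field K] {m : ℕ}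

lemma Matrix.isUnit_of_rank_eq {A : Matrix (Fin m) (Fin m) K} (hA : A.rank = m) : IsUnit A := by
  have hrange : LinearMap.range A.mulVecLin = ⊤ :=
    Submodule.eq_top_of_finrank_eq (by rw [finrank_fin_fun]; exact hA)
  exact mulVec_surjective_iff_isUnit.mp (LinearMap.range_eq_top.mp hrange)

lemma exists_rank_sub_eq_of_square {V : Submodule K (Matrix (Fin m) (Fin m) K)}
    (hV : 2 ≤ finrank K V) (hVrank : ∀ M ∈ V, M ≠ 0 → m ≤ M.rank)
    {C : Matrix (Fin m) (Fin m) K} (hC : C.rank = m) :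
    ∃ w : Matrix (Fin m) (Fin m) K, w.rank = m ∧ (C - w).rank = m := by
  have hrank : ∀ M ∈ V, M ≠ 0 → M.rank = m := fun M hM h0 =>
    le_antisymm M.rank_le_width (hVrank M hM h0)
  have : Nontrivial V := Module.nontrivial_of_finrank_pos (R := K) (by omega)
  obtain ⟨D₁, hD₁0⟩ := exists_ne (0 : V)
  obtain ⟨D₂, hD⟩ := exists_linearIndependent_pair_of_one_lt_finrank (R := K) (by omega) hD₁0
  have hD₂ : (D₂ : Matrix (Fin m) (Fin m) K) ≠ 0 := by simpa using hD.ne_zero 1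
  have hD₁₂ : (D₁ - D₂ : Matrix (Fin m) (Fin m) K) ≠ 0 := by
    simpa [sub_eq_zero] using fun h =>
      hD.injective.ne (show (0 : Fin 2) ≠ 1 by decide) (Subtype.ext h)
  have hD₁ : IsUnit (D₁ : Matrix (Fin m) (Fin m) K) :=
    isUnit_of_rank_eq (hrank _ D₁.2 (by simpa using hD₁0))
  -- left multiplication by the unit `P` preserves ranks and sends `D₁` to `C`
  set P := C * (D₁ : Matrix (Fin m) (Fin m) K)⁻¹
  have hP : IsUnit P.det := by
    rw [det_mul]
    exact ((isUnit_iff_isUnit_det _).mp (isUnit_of_rank_eq hC)).mul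
      (isUnit_nonsing_inv_det _ ((isUnit_iff_isUnit_det _).mp hD₁))
  refine ⟨P * D₂, ?_, ?_⟩
  · rw [rank_mul_eq_right_of_isUnit_det _ _ hP, hrank _ D₂.2 hD₂]
  · have hPD₁ : P * D₁ = C := by
      rw [mul_assoc, nonsing_inv_mul _ ((isUnit_iff_isUnit_det _).mp hD₁), mul_one]
    have : C - P * D₂ = P * (D₁ - D₂) := by rw [mul_sub, hPD₁]
    rw [this, rank_mul_eq_right_of_isUnit_det _ _ hP, hrank _ (V.sub_mem D₁.2 D₂.2) hD₁₂]

end Square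

lemma Submodule.finrank_add_finrank_le_finrank_inf_add {K V : Type*} [Field K] [AddCommGroup V]
    [Module K V] [FiniteDimensional K V] (s t : Submodule K V) :
    finrank K s + finrank K t ≤ finrank K ↥(s ⊓ t) + finrank K V := by
  have := (s ⊔ t).finrank_le
  have := finrank_sup_add_finrank_inf_eq s t
  omega

theorem exists_rank_sub_eq_of_finrank_eq_mul {F : Type*} [Field F] [Fintype F] {m n t : ℕ}
    (hm : 2 ≤ m) (hnm : n ≤ m) {𝒞 : Submodule F (Matrix (Fin m) (Fin n) F)}
    (h𝒞 : ∀ M ∈ 𝒞, M.rank ≤ t) (hdim : finrank F 𝒞 = m * t)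
    {C : Matrix (Fin m) (Fin n) F} (hC : C ∈ 𝒞) (hCt : C.rank = t) :
    ∃ w ∈ 𝒞, w.rank = t ∧ (C - w).rank = t := by
  have htn : t ≤ n := hCt ▸ C.rank_le_width
  obtain rfl | ht0 := Nat.eq_zero_or_pos t
  · exact ⟨0, 𝒞.zero_mem, rank_zero, by rwa [sub_zero]⟩
  obtain ⟨𝒟, h𝒟, h𝒟rank⟩ :=
    exists_submodule_finrank_eq_forall_rank_ge F (d := n - t) (by omega) hnm
  obtain htm | htm := (htn.trans hnm).lt_or_eq
  · refine exists_rank_sub_eq_of_lt_finrank_inf h𝒞 (𝒟 := 𝒟) (fun M hM h0 => ?_) ?_ hC hCt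
    · have := h𝒟rank M hM h0
      omega
    have hinf := Submodule.finrank_add_finrank_le_finrank_inf_add 𝒞 𝒟
    have : m * t + m * (n - t + 1) = m * n + m := by
      rw [← mul_add, ← mul_add_one]; congr 1; omega
    simp only [hdim, h𝒟, finrank_matrix, Fintype.card_fin, finrank_self, mul_one] at hinf
    omega
  · obtain rfl : n = m := by omega
    subst htm
    have htop : 𝒞 = ⊤ := Submodule.eq_top_of_finrank_eq (by simp [hdim, finrank_matrix])
    obtain ⟨w, hwt, hCw⟩ := exists_rank_sub_eq_of_square (V := 𝒟)
      (by rw [h𝒟, Nat.sub_self]; omega) (by simpa using h𝒟rank) hCt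
    exact ⟨w, htop ▸ Submodule.mem_top, hwt, hCw⟩

lemma rank_le_maxrk {F : Type} [Field F] {a b : ℕ} (𝒜 : Submodule F (Matrix (Fin a) (Fin b) F))
    {M : Matrix (Fin a) (Fin b) F} (hM : M ∈ 𝒜) : M.rank ≤ maxrk 𝒜 :=
  le_csSup ⟨b, fun _ ⟨N, _, hN⟩ => hN ▸ N.rank_le_width⟩ ⟨M, hM, rfl⟩

theorem statement6_general (m n t : ℕ) (hm : 2 ≤ m) (hnm : n ≤ m)
    (𝒞 : Submodule (ZMod 2) (Matrix (Fin m) (Fin n) (ZMod 2)))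
    (hopt : Module.finrank (ZMod 2) 𝒞 = m * maxrk 𝒞)
    (ht : maxrk 𝒞 = t) :
    ∀ C ∈ 𝒞, C.rank = t →
      ∃ B₁ ∈ 𝒞, ∃ B₂ ∈ 𝒞, B₁.rank = t ∧ B₂.rank = t ∧ C = B₁ + B₂ := by
  intro C hC hCt
  obtain ⟨w, hw, hwt, hCw⟩ := exists_rank_sub_eq_of_finrank_eq_mul hm hnm
    (fun M hM => ht ▸ rank_le_maxrk 𝒞 hM) (ht ▸ hopt) hC hCt
  exact ⟨w, hw, C - w, 𝒞.sub_mem hC hw, hwt, hCw, (add_sub_cancel w C).symm⟩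

/-- In an optimal binary rank-metric anticode with `m ≥ 2`, every element of
maximum rank `t` is the sum of two elements of rank `t` of the anticode. -/
theorem statement6 (m n t : ℕ) (hm : 2 ≤ m) (hn : 1 ≤ n) (hnm : n ≤ m)
    (𝒞 : Submodule (ZMod 2) (Matrix (Fin m) (Fin n) (ZMod 2)))
    (hopt : Module.finrank (ZMod 2) 𝒞 = m * maxrk 𝒞)
    (ht : maxrk 𝒞 = t) :
    ∀ C ∈ 𝒞, C.rank = t →
      ∃ B₁ ∈ 𝒞, ∃ B₂ ∈ 𝒞, B₁.rank = t ∧ B₂.rank = t ∧ C = B₁ + B₂ :=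
  statement6_general m n t hm hnm 𝒞 hopt ht
end

section
/- Let 𝒞 ⊆ F_2^ℓ be an F_2-linear code with dim(𝒞) = t such that the maximum Hamming weight of an element of 𝒞 equals t (i.e., 𝒞 is an optimal Hamming-metric anticode of dimension t). Then 𝒞 is spanned as an F_2-vector space by its elements of Hamming weight t together with its elements of Hamming weight t−1. -/
/-!
Fix a codeword `m` of maximal weight `t`. A nonzero codeword vanishing on the support of `m`
could be added to `m` to exceed weight `t`, so restriction to the support of `m` is injective
on the code; as the code has dimension `t`, it is an isomorphism onto `F^{supp m}`. Hence for
every `j ∈ supp m` some codeword `g` agrees with `m` on `supp m` except at `j`, where it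
vanishes; it has weight `t` or `t - 1`, and `m - g` restricts to a multiple of the `j`-th unit
vector. These restrictions span `F^{supp m}`, and a subspace of the code that restricts onto
`F^{supp m}` has dimension at least `t`, so it is the whole code. The argument works over any
field.
-/

open Module

section HammingWeight

variable {ι M : Type*} [Fintype ι] [AddZeroClass M] [DecidableEq M]

theorem hammingNorm_add_of_forall_eq_zero {m c : ι → M} (h : ∀ i, m i ≠ 0 → c i = 0) :
    hammingNorm (m + c) = hammingNorm m + hammingNorm c := by
  classical
  unfold hammingNorm
  rw [← Finset.card_union_of_disjoint (Finset.disjoint_filter.2 fun i _ hm hc => hc (h i hm))]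
  congr 1
  ext i
  by_cases hm : m i = 0 <;> simp [hm, h i]

theorem hammingNorm_sub_one_le {m g : ι → M} {j : ι}
    (h : ∀ i, i ≠ j → m i ≠ 0 → g i ≠ 0) : hammingNorm m - 1 ≤ hammingNorm g := by
  classical
  unfold hammingNorm
  calc (Finset.univ.filter fun i => m i ≠ 0).card - 1
      ≤ ((Finset.univ.filter fun i => m i ≠ 0).erase j).card := Finset.pred_card_le_card_erase
    _ ≤ (Finset.univ.filter fun i => g i ≠ 0).card :=
      Finset.card_le_card fun i hi => by
        simp only [Finset.mem_erase, Finset.mem_filter, Finset.mem_univ, true_and] at hi ⊢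
        exact h i hi.1 hi.2

end HammingWeight

section MaximalWeight

variable {ι F : Type*} [Field F] {C : Submodule F (ι → F)} {m : ι → F}

def restrictSupport (m : ι → F) : (ι → F) →ₗ[F] ({i // m i ≠ 0} → F) :=
  LinearMap.funLeft F F Subtype.val

@[simp]
theorem restrictSupport_apply (c : ι → F) (i : {i // m i ≠ 0}) :
    restrictSupport m c i = c i :=
  rfl

variable [Fintype ι] [DecidableEq F]

theorem finrank_restrictSupport_codomain (m : ι → F) :
    finrank F ({i // m i ≠ 0} → F) = hammingNorm m := by
  classical
  rw [finrank_fintype_fun_eq_card, Fintype.card_subtype]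
  rfl

theorem disjoint_ker_restrictSupport (hm : m ∈ C)
    (hmax : ∀ c ∈ C, hammingNorm c ≤ hammingNorm m) :
    Disjoint C (LinearMap.ker (restrictSupport m)) := by
  refine LinearMap.disjoint_ker.2 fun c hc hc0 => ?_
  have hvanish : ∀ i, m i ≠ 0 → c i = 0 := fun i hi => congrFun hc0 ⟨i, hi⟩
  have hsum := hammingNorm_add_of_forall_eq_zero hvanish
  have := hmax _ (C.add_mem hm hc)
  exact hammingNorm_eq_zero.1 (by omega)

theorem map_restrictSupport_eq_top (hm : m ∈ C)
    (hmax : ∀ c ∈ C, hammingNorm c ≤ hammingNorm m) (hdim : finrank F C = hammingNorm m) :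
    C.map (restrictSupport m) = ⊤ := by
  have hinj : Function.Injective ((restrictSupport m).domRestrict C) :=
    LinearMap.injective_domRestrict_iff.2 (disjoint_ker_restrictSupport hm hmax)
  have hsurj := (LinearMap.injective_iff_surjective_of_finrank_eq_finrank
    (hdim.trans (finrank_restrictSupport_codomain m).symm)).1 hinj
  rw [← LinearMap.range_domRestrict, LinearMap.range_eq_top.2 hsurj]

theorem exists_mem_restrictSupport_eq_sub_single [DecidableEq ι]
    (hm : m ∈ C) (hmax : ∀ c ∈ C, hammingNorm c ≤ hammingNorm m)
    (hdim : finrank F C = hammingNorm m) (k : {i // m i ≠ 0}) :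
    ∃ g ∈ C, (hammingNorm g = hammingNorm m ∨ hammingNorm g = hammingNorm m - 1) ∧
      restrictSupport m g = restrictSupport m m - Pi.single k (m k) := by
  obtain ⟨g, hgC, hg⟩ :
      restrictSupport m m - Pi.single k (m k) ∈ C.map (restrictSupport m) := by
    rw [map_restrictSupport_eq_top hm hmax hdim]
    trivial
  refine ⟨g, hgC, ?_, hg⟩
  have hlower : hammingNorm m - 1 ≤ hammingNorm g := by
    refine hammingNorm_sub_one_le (j := k.1) fun i hik hi => ?_
    have hgi : g i = m i := by
      simpa [Pi.single_apply, Subtype.ext_iff, hik] using congrFun hg ⟨i, hi⟩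
    rwa [hgi]
  have := hmax g hgC
  omega

theorem span_hammingNorm_eq_or_eq_sub_one (hm : m ∈ C)
    (hmax : ∀ c ∈ C, hammingNorm c ≤ hammingNorm m) (hdim : finrank F C = hammingNorm m) :
    Submodule.span F {c | c ∈ C ∧
      (hammingNorm c = hammingNorm m ∨ hammingNorm c = hammingNorm m - 1)} = C := by
  classical
  set S := Submodule.span F
    {c | c ∈ C ∧ (hammingNorm c = hammingNorm m ∨ hammingNorm c = hammingNorm m - 1)}
  have hSC : S ≤ C := Submodule.span_le.2 fun c hc => hc.1
  have hmS : m ∈ S := Submodule.subset_span ⟨hm, Or.inl rfl⟩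
  have hsingle : ∀ k, Pi.single k 1 ∈ S.map (restrictSupport m) := by
    intro k
    obtain ⟨g, hgC, hgwt, hg⟩ := exists_mem_restrictSupport_eq_sub_single hm hmax hdim k
    have hgS : g ∈ S := Submodule.subset_span ⟨hgC, hgwt⟩
    have hunit : Pi.single k 1 = (m k)⁻¹ • (restrictSupport m m - restrictSupport m g) := by
      rw [hg, sub_sub_cancel, ← Pi.single_smul, smul_eq_mul, inv_mul_cancel₀ k.2]
    rw [hunit, ← map_sub]
    exact Submodule.smul_mem _ _ (Submodule.mem_map_of_mem (S.sub_mem hmS hgS))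
  have htop : S.map (restrictSupport m) = ⊤ := by
    refine eq_top_iff.2 fun v _ => ?_
    rw [pi_eq_sum_univ' v]
    exact Submodule.sum_mem _ fun k _ => Submodule.smul_mem _ _ (hsingle k)
  refine Submodule.eq_of_le_of_finrank_le hSC ?_
  calc finrank F C = finrank F ({i // m i ≠ 0} → F) :=
        hdim.trans (finrank_restrictSupport_codomain m).symm
    _ = finrank F (S.map (restrictSupport m)) := by rw [htop, finrank_top]
    _ ≤ finrank F S := Submodule.finrank_map_le _ _

end MaximalWeight

/-- An optimal binary Hamming-metric anticode of dimension `t` is spanned by its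
elements of Hamming weight `t` together with its elements of Hamming weight `t - 1`. -/
theorem statement8 (ℓ t : ℕ)
    (𝒞 : Submodule (ZMod 2) (Fin ℓ → ZMod 2))
    (hdim : Module.finrank (ZMod 2) 𝒞 = t)
    (hmax : sSup {w | ∃ c ∈ 𝒞, hammingNorm c = w} = t) :
    Submodule.span (ZMod 2)
        {c | c ∈ 𝒞 ∧ (hammingNorm c = t ∨ hammingNorm c = t - 1)} = 𝒞 := by
  have hbdd : BddAbove {w | ∃ c ∈ 𝒞, hammingNorm c = w} :=
    ⟨ℓ, by rintro w ⟨c, -, rfl⟩; simpa using hammingNorm_le_card_fintype (x := c)⟩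
  obtain ⟨m, hm, hmt⟩ : t ∈ {w | ∃ c ∈ 𝒞, hammingNorm c = w} :=
    hmax ▸ Nat.sSup_mem ⟨0, 0, 𝒞.zero_mem, hammingNorm_zero⟩ hbdd
  have hub : ∀ c ∈ 𝒞, hammingNorm c ≤ hammingNorm m := fun c hc =>
    hmt ▸ hmax ▸ le_csSup hbdd ⟨c, hc, rfl⟩
  subst hmt
  exact span_hammingNorm_eq_or_eq_sub_one hm hub hdim
end

section
/- (Characterization of linear sum-rank isometries.) Let φ : 𝕄 → 𝕄 be an F_q-linear map with srk(φ(C)) = srk(C) for all C ∈ 𝕄. Then there exist a permutation σ of [ℓ] such that σ(i) = j implies m_i = m_j and n_i = n_j, and for each i ∈ [ℓ] an F_q-linear map ψ_i : F_q^{m_i×n_i} → F_q^{m_i×n_i} satisfying rk(ψ_i(A)) = rk(A) for all A ∈ F_q^{m_i×n_i}, such that φ(C_1,…,C_ℓ) = (ψ_1(C_{σ(1)}),…,ψ_ℓ(C_{σ(ℓ)})) for all (C_1,…,C_ℓ) ∈ 𝕄. -/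
/-!
An isometry `φ` is injective and sends a rank-one matrix placed in block `j` to a tuple of
sum-rank one, i.e. to a rank-one matrix sitting in a single block. Two rank-one matrices `u vᵀ`
and `u' v'ᵀ` of block `j` are linked through `u v'ᵀ`, and consecutive members of this chain have
a sum of rank at most one, which forces their images into the same block. As every matrix is a
sum of rank-one matrices, all of block `j` goes to a single block `τ j`, and surjectivity of `φ`
makes `τ` a permutation.

The component `φ_{τ j, j}` preserves rank, hence is injective, so `m_j n_j ≤ m_{τ j} n_{τ j}`.
On the matrices supported in one column it takes rank-one values whose pairwise sums still have
rank at most one, so with `u₀ v₀ᵀ` one of them, each lies in `{u₀ wᵀ}` or in `{w v₀ᵀ}`; a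
subspace covered by two subspaces lies in one of them, and this gives `m_j ≤ max m_{τ j} n_{τ j} = m_{τ j}`. Summed over the permutation `τ`, these
inequalities become equalities.
-/

open Matrix

open Module

theorem LinearMap.apply_eq_sum_single {R ι N : Type*} {M : ι → Type*} [Semiring R] [Fintype ι]
    [DecidableEq ι] [∀ i, AddCommMonoid (M i)] [∀ i, Module R (M i)] [AddCommMonoid N]
    [Module R N] (f : (∀ i, M i) →ₗ[R] N) (x : ∀ i, M i) :
    f x = ∑ i, f (Pi.single i (x i)) := by
  conv_lhs => rw [← Finset.univ_sum_single x]
  rw [map_sum]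

theorem Equiv.Perm.apply_eq_of_forall_le {ι M : Type*} [Fintype ι] [AddCommMonoid M]
    [PartialOrder M] [IsOrderedCancelAddMonoid M] (σ : Equiv.Perm ι) {f : ι → M}
    (h : ∀ i, f i ≤ f (σ i)) (i : ι) : f (σ i) = f i :=
  ((Finset.sum_eq_sum_iff_of_le fun i _ => h i).mp (Equiv.sum_comp σ f).symm i
    (Finset.mem_univ i)).symm

namespace Matrix

variable {F m n : Type*} [Field F]

theorem vecMulVec_eq_zero_iff {u : m → F} {v : n → F} :
    vecMulVec u v = 0 ↔ u = 0 ∨ v = 0 := by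
  simp only [← ext_iff, vecMulVec_apply, zero_apply, mul_eq_zero, funext_iff, Pi.zero_apply,
    forall_or_left, forall_or_right]

theorem single_eq_vecMulVec [DecidableEq m] [DecidableEq n] (a : m) (b : n) (c : F) :
    single a b c = vecMulVec (Pi.single a c) (Pi.single b 1) := by
  ext i j
  simp only [single_apply, vecMulVec_apply, Pi.single_apply]
  split_ifs <;> simp_all

theorem rank_eq_zero_iff [Fintype n] {A : Matrix m n F} : A.rank = 0 ↔ A = 0 := by
  classical
  rw [rank, Submodule.finrank_eq_zero, LinearMap.range_eq_bot, ← toLin'_apply',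
    map_eq_zero_iff _ toLin'.injective]

theorem exists_eq_vecMulVec_of_rank_le_one [Fintype n] {A : Matrix m n F} (h : A.rank ≤ 1) :
    ∃ u v, A = vecMulVec u v := by
  classical
  obtain ⟨u, hu⟩ := finrank_le_one_iff.mp h
  choose v hv using fun j => hu ⟨A.col j, Pi.single j 1, mulVec_single_one A j⟩
  refine ⟨u, v, ext fun i j => ?_⟩
  simpa [vecMulVec_apply, mul_comm] using
    congr_arg (fun x : LinearMap.range A.mulVecLin => (x : m → F) i) (hv j).symm

theorem exists_rank_le_one_map_ne_zero [Fintype m] [Fintype n] {M : Type*} [AddCommGroup M]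
    [Module F M] (f : Matrix m n F →ₗ[F] M) {A : Matrix m n F} (hA : f A ≠ 0) :
    ∃ X : Matrix m n F, X.rank ≤ 1 ∧ f X ≠ 0 := by
  classical
  rw [matrix_eq_sum_single A, map_sum] at hA
  obtain ⟨a, -, ha⟩ := Finset.exists_ne_zero_of_sum_ne_zero hA
  rw [map_sum] at ha
  obtain ⟨b, -, hb⟩ := Finset.exists_ne_zero_of_sum_ne_zero ha
  exact ⟨_, single_eq_vecMulVec a b (A a b) ▸ rank_vecMulVec_le _ _, hb⟩

theorem two_le_rank_vecMulVec_add_vecMulVec [Fintype m] [Fintype n] {u₀ u₁ : m → F}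
    {v₀ v₁ : n → F} (hu : LinearIndependent F ![u₀, u₁]) (hv : LinearIndependent F ![v₀, v₁]) :
    2 ≤ (vecMulVec u₀ v₀ + vecMulVec u₁ v₁).rank := by
  have hfactor : vecMulVec u₀ v₀ + vecMulVec u₁ v₁ = (of ![u₀, u₁])ᵀ * of ![v₀, v₁] := by
    ext i j
    simp [mul_apply, Fin.sum_univ_two, vecMulVec_apply]
  have hsurj : LinearMap.range (of ![v₀, v₁]).mulVecLin = ⊤ := by
    apply Submodule.eq_top_of_finrank_eq
    rw [← rank, LinearIndependent.rank_matrix (M := of ![v₀, v₁]) hv]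
    simp
  rw [hfactor, rank, mulVecLin_mul, LinearMap.range_comp_of_range_eq_top _ hsurj, ← rank,
    rank_transpose, LinearIndependent.rank_matrix (M := of ![u₀, u₁]) hu, Fintype.card_fin]

theorem vecMulVec_eq_or_of_rank_add_le_one [Fintype m] [Fintype n] {u₀ u : m → F}
    {v₀ v : n → F} (hu₀ : u₀ ≠ 0) (hv₀ : v₀ ≠ 0)
    (h : (vecMulVec u₀ v₀ + vecMulVec u v).rank ≤ 1) :
    (∃ w, vecMulVec u₀ w = vecMulVec u v) ∨ ∃ w, vecMulVec w v₀ = vecMulVec u v := by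
  by_contra! hne
  have hu : LinearIndependent F ![u, u₀] := linearIndependent_fin2.mpr ⟨hu₀, fun a ha =>
    hne.1 (a • v) (by rw [← (by simpa using ha : a • u₀ = u), smul_vecMulVec, vecMulVec_smul])⟩
  have hv : LinearIndependent F ![v, v₀] := linearIndependent_fin2.mpr ⟨hv₀, fun a ha =>
    hne.2 (a • u) (by rw [← (by simpa using ha : a • v₀ = v), smul_vecMulVec, vecMulVec_smul])⟩
  have := two_le_rank_vecMulVec_add_vecMulVec hu hv
  rw [add_comm] at this
  omega

theorem finrank_le_max_of_injective_of_rank_le_one [Fintype m] [Fintype n] {V : Type*}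
    [AddCommGroup V] [Module F V] [FiniteDimensional F V] {g : V →ₗ[F] Matrix m n F}
    (hg : Function.Injective g) (h : ∀ x, (g x).rank ≤ 1) :
    finrank F V ≤ max (Fintype.card m) (Fintype.card n) := by
  cases subsingleton_or_nontrivial V
  · simp [finrank_zero_of_subsingleton]
  obtain ⟨x₀, hx₀⟩ := exists_ne (0 : V)
  obtain ⟨u₀, v₀, hgx₀⟩ := exists_eq_vecMulVec_of_rank_le_one (h x₀)
  obtain ⟨hu₀, hv₀⟩ : u₀ ≠ 0 ∧ v₀ ≠ 0 := by
    rw [← not_or, ← vecMulVec_eq_zero_iff, ← hgx₀]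
    exact (map_ne_zero_iff g hg).mpr hx₀
  let left : (n → F) →ₗ[F] Matrix m n F := vecMulVecBilin F F u₀
  let right : (m → F) →ₗ[F] Matrix m n F := (vecMulVecBilin F F).flip v₀
  have hcover : (LinearMap.range g : Set (Matrix m n F)) ⊆
      (LinearMap.range left : Set (Matrix m n F)) ∪ LinearMap.range right := by
    rintro _ ⟨x, rfl⟩
    obtain ⟨u, v, hgx⟩ := exists_eq_vecMulVec_of_rank_le_one (h x)
    have hsum : (vecMulVec u₀ v₀ + vecMulVec u v).rank ≤ 1 := by
      rw [← hgx₀, ← hgx, ← map_add]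
      exact h _
    rw [hgx]
    exact vecMulVec_eq_or_of_rank_add_le_one hu₀ hv₀ hsum
  rw [← LinearMap.finrank_range_of_inj hg]
  rcases AddSubgroupClass.subset_union.mp hcover with hle | hle
  · calc finrank F (LinearMap.range g) ≤ finrank F (LinearMap.range left) :=
          Submodule.finrank_mono hle
      _ ≤ Fintype.card n := by simpa using LinearMap.finrank_range_le left
      _ ≤ _ := le_max_right _ _
  · calc finrank F (LinearMap.range g) ≤ finrank F (LinearMap.range right) :=
          Submodule.finrank_mono hle
      _ ≤ Fintype.card m := by simpa using LinearMap.finrank_range_le right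
      _ ≤ _ := le_max_left _ _

section RankPreserving

variable [Fintype n] {m' n' : Type*} [Fintype n'] {ψ : Matrix m n F →ₗ[F] Matrix m' n' F}

theorem injective_of_rank_map_eq (hψ : ∀ A, (ψ A).rank = A.rank) : Function.Injective ψ :=
  (injective_iff_map_eq_zero ψ).mpr fun A hA =>
    rank_eq_zero_iff.mp (by rw [← hψ, hA, rank_zero])

theorem card_mul_card_le_of_rank_map_eq [Fintype m] [Fintype m']
    (hψ : ∀ A, (ψ A).rank = A.rank) :
    Fintype.card m * Fintype.card n ≤ Fintype.card m' * Fintype.card n' := by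
  simpa [finrank_matrix] using
    LinearMap.finrank_le_finrank_of_injective (injective_of_rank_map_eq hψ)

theorem card_le_max_of_rank_map_eq [Fintype m] [Fintype m'] [Nonempty n]
    (hψ : ∀ A, (ψ A).rank = A.rank) :
    Fintype.card m ≤ max (Fintype.card m') (Fintype.card n') := by
  classical
  obtain ⟨b⟩ := ‹Nonempty n›
  let column : (m → F) →ₗ[F] Matrix m n F := (vecMulVecBilin F F).flip (Pi.single b (1 : F))
  have hcolumn : Function.Injective column := by
    refine (injective_iff_map_eq_zero column).mpr fun u hu => ?_
    simpa [column, vecMulVec_eq_zero_iff] using hu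
  simpa using finrank_le_max_of_injective_of_rank_le_one (g := ψ ∘ₗ column)
    ((injective_of_rank_map_eq hψ).comp hcolumn) (fun u => by
      simpa [hψ, column] using rank_vecMulVec_le u (Pi.single b (1 : F)))

end RankPreserving

end Matrix

section SumRank

variable {F : Type} [Field F] {ℓ : ℕ} {m n : Fin ℓ → ℕ}

theorem srk_eq_zero_iff {C : ∀ i, Matrix (Fin (m i)) (Fin (n i)) F} : srk C = 0 ↔ C = 0 := by
  simp [srk, Finset.sum_eq_zero_iff, Matrix.rank_eq_zero_iff, funext_iff]

theorem srk_single (j : Fin ℓ) (A : Matrix (Fin (m j)) (Fin (n j)) F) :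
    srk (Pi.single j A : ∀ i, Matrix (Fin (m i)) (Fin (n i)) F) = A.rank := by
  rw [srk, Finset.sum_eq_single j (fun i _ hi => by rw [Pi.single_eq_of_ne hi, rank_zero])
    (by simp), Pi.single_eq_same]

theorem eq_of_srk_le_one {C : ∀ i, Matrix (Fin (m i)) (Fin (n i)) F} (h : srk C ≤ 1)
    {i k : Fin ℓ} (hi : C i ≠ 0) (hk : C k ≠ 0) : i = k := by
  by_contra hik
  have hpair := Finset.sum_le_sum_of_subset (f := fun x => (C x).rank)
    (Finset.subset_univ {i, k})
  rw [Finset.sum_pair hik] at hpair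
  have hi' := Nat.pos_of_ne_zero (mt Matrix.rank_eq_zero_iff.mp hi)
  have hk' := Nat.pos_of_ne_zero (mt Matrix.rank_eq_zero_iff.mp hk)
  unfold srk at h
  omega

theorem eq_of_srk_add_le_one {C D : ∀ i, Matrix (Fin (m i)) (Fin (n i)) F} (hC : srk C ≤ 1)
    (hD : srk D ≤ 1) (hCD : srk (C + D) ≤ 1) {i k : Fin ℓ} (hi : C i ≠ 0) (hk : D k ≠ 0) :
    i = k := by
  by_contra hik
  have hDi : D i = 0 := by_contra fun h => hik (eq_of_srk_le_one hD h hk)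
  have hCk : C k = 0 := by_contra fun h => hik (eq_of_srk_le_one hC hi h)
  exact hik (eq_of_srk_le_one hCD (by simpa [hDi] using hi) (by simpa [hCk] using hk))

variable {φ : (∀ i, Matrix (Fin (m i)) (Fin (n i)) F) →ₗ[F] ∀ i, Matrix (Fin (m i)) (Fin (n i)) F}

variable (φ) in
def blockComponent (i j : Fin ℓ) :
    Matrix (Fin (m j)) (Fin (n j)) F →ₗ[F] Matrix (Fin (m i)) (Fin (n i)) F :=
  LinearMap.proj i ∘ₗ φ ∘ₗ LinearMap.single F (fun i => Matrix (Fin (m i)) (Fin (n i)) F) j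

@[simp]
theorem blockComponent_apply (i j : Fin ℓ) (A : Matrix (Fin (m j)) (Fin (n j)) F) :
    blockComponent φ i j A = φ (Pi.single j A) i :=
  rfl

theorem injective_of_srk_map_eq (hφ : ∀ C, srk (φ C) = srk C) : Function.Injective φ :=
  (injective_iff_map_eq_zero φ).mpr fun C hC =>
    srk_eq_zero_iff.mp (by rw [← hφ, hC, srk_eq_zero_iff])

theorem srk_map_single (hφ : ∀ C, srk (φ C) = srk C) (j : Fin ℓ)
    (A : Matrix (Fin (m j)) (Fin (n j)) F) : srk (φ (Pi.single j A)) = A.rank := by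
  rw [hφ, srk_single]

theorem eq_of_map_single_add_rank_le_one (hφ : ∀ C, srk (φ C) = srk C) {j : Fin ℓ}
    {X Y : Matrix (Fin (m j)) (Fin (n j)) F} (hX : X.rank ≤ 1) (hY : Y.rank ≤ 1)
    (hXY : (X + Y).rank ≤ 1) {i k : Fin ℓ} (hi : φ (Pi.single j X) i ≠ 0)
    (hk : φ (Pi.single j Y) k ≠ 0) : i = k := by
  refine eq_of_srk_add_le_one ?_ ?_ ?_ hi hk
  · rwa [srk_map_single hφ]
  · rwa [srk_map_single hφ]
  · rwa [← map_add, ← Pi.single_add, srk_map_single hφ]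

theorem eq_of_map_single_rank_le_one (hφ : ∀ C, srk (φ C) = srk C) {j : Fin ℓ}
    {X Y : Matrix (Fin (m j)) (Fin (n j)) F} (hX : X.rank ≤ 1) (hY : Y.rank ≤ 1) {i k : Fin ℓ}
    (hi : φ (Pi.single j X) i ≠ 0) (hk : φ (Pi.single j Y) k ≠ 0) : i = k := by
  obtain ⟨u, v, rfl⟩ := Matrix.exists_eq_vecMulVec_of_rank_le_one hX
  obtain ⟨u', v', rfl⟩ := Matrix.exists_eq_vecMulVec_of_rank_le_one hY
  have hu : u ≠ 0 := by
    rintro rfl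
    simp at hi
  have hv' : v' ≠ 0 := by
    rintro rfl
    rw [Matrix.vecMulVec_eq_zero_iff.mpr (Or.inr rfl)] at hk
    simp at hk
  -- `u v'ᵀ` shares its column space with `u vᵀ` and its row space with `u' v'ᵀ`
  obtain ⟨t, ht⟩ : ∃ t, φ (Pi.single j (vecMulVec u v')) t ≠ 0 := by
    refine Function.ne_iff.mp ((map_ne_zero_iff φ (injective_of_srk_map_eq hφ)).mpr ?_)
    simp [Matrix.vecMulVec_eq_zero_iff, hu, hv']
  calc i = t := eq_of_map_single_add_rank_le_one hφ hX (rank_vecMulVec_le _ _)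
        (by rw [← vecMulVec_add]; exact rank_vecMulVec_le _ _) hi ht
    _ = k := eq_of_map_single_add_rank_le_one hφ (rank_vecMulVec_le _ _) hY
        (by rw [← add_vecMulVec]; exact rank_vecMulVec_le _ _) ht hk

theorem eq_of_map_single_ne_zero (hφ : ∀ C, srk (φ C) = srk C) {j : Fin ℓ}
    {A B : Matrix (Fin (m j)) (Fin (n j)) F} {i k : Fin ℓ} (hi : φ (Pi.single j A) i ≠ 0)
    (hk : φ (Pi.single j B) k ≠ 0) : i = k := by
  obtain ⟨X, hX, hXi⟩ := Matrix.exists_rank_le_one_map_ne_zero (blockComponent φ i j) hi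
  obtain ⟨Y, hY, hYk⟩ := Matrix.exists_rank_le_one_map_ne_zero (blockComponent φ k j) hk
  exact eq_of_map_single_rank_le_one hφ hX hY hXi hYk

theorem exists_block_target (hφ : ∀ C, srk (φ C) = srk C) (j : Fin ℓ) :
    ∃ t, ∀ A i, φ (Pi.single j A) i ≠ 0 → i = t := by
  by_cases h : ∃ B k, φ (Pi.single j B) k ≠ 0
  · obtain ⟨B, k, hk⟩ := h
    exact ⟨k, fun A i hi => eq_of_map_single_ne_zero hφ hi hk⟩
  · exact ⟨j, fun A i hi => (h ⟨A, i, hi⟩).elim⟩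

section BlockTarget

variable {τ : Fin ℓ → Fin ℓ}

theorem map_single_apply_eq_zero (hτ : ∀ j A i, φ (Pi.single j A) i ≠ 0 → i = τ j)
    {j i : Fin ℓ} (hi : i ≠ τ j) (A : Matrix (Fin (m j)) (Fin (n j)) F) :
    φ (Pi.single j A) i = 0 :=
  not_not.mp (mt (hτ j A i) hi)

theorem rank_blockComponent (hφ : ∀ C, srk (φ C) = srk C)
    (hτ : ∀ j A i, φ (Pi.single j A) i ≠ 0 → i = τ j) {j i : Fin ℓ} (hji : τ j = i)
    (A : Matrix (Fin (m j)) (Fin (n j)) F) : (blockComponent φ i j A).rank = A.rank := by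
  rw [blockComponent_apply, ← srk_map_single hφ j A, srk, Finset.sum_eq_single i
    (fun k _ hk => by rw [map_single_apply_eq_zero hτ (hji ▸ hk), rank_zero]) (by simp)]

theorem surjective_of_block_target (hm : ∀ i, 1 ≤ m i) (hn : ∀ i, 1 ≤ n i)
    (hφ : ∀ C, srk (φ C) = srk C) (hτ : ∀ j A i, φ (Pi.single j A) i ≠ 0 → i = τ j) :
    Function.Surjective τ := by
  intro t
  have : Nonempty (Fin (m t)) := ⟨⟨0, hm t⟩⟩
  have : Nonempty (Fin (n t)) := ⟨⟨0, hn t⟩⟩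
  obtain ⟨B, hB⟩ := exists_ne (0 : Matrix (Fin (m t)) (Fin (n t)) F)
  obtain ⟨C, hC⟩ := LinearMap.injective_iff_surjective.mp (injective_of_srk_map_eq hφ)
    (Pi.single t B)
  have hCt : φ C t ≠ 0 := by rwa [hC, Pi.single_eq_same]
  rw [LinearMap.apply_eq_sum_single φ C, Finset.sum_apply] at hCt
  obtain ⟨j, -, hj⟩ := Finset.exists_ne_zero_of_sum_ne_zero hCt
  exact ⟨j, (hτ j _ t hj).symm⟩

end BlockTarget

theorem exists_perm_block_target (hm : ∀ i, 1 ≤ m i) (hn : ∀ i, 1 ≤ n i)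
    (hφ : ∀ C, srk (φ C) = srk C) :
    ∃ τ : Equiv.Perm (Fin ℓ), ∀ j A i, φ (Pi.single j A) i ≠ 0 → i = τ j := by
  choose τ hτ using exists_block_target hφ
  exact ⟨Equiv.ofBijective τ (Finite.surjective_iff_bijective.mp
    (surjective_of_block_target hm hn hφ hτ)), hτ⟩

theorem sizes_eq_of_block_target (hm : ∀ i, 1 ≤ m i) (hn : ∀ i, 1 ≤ n i) (hnm : ∀ i, n i ≤ m i)
    (hφ : ∀ C, srk (φ C) = srk C) {τ : Equiv.Perm (Fin ℓ)}
    (hτ : ∀ j A i, φ (Pi.single j A) i ≠ 0 → i = τ j) (j : Fin ℓ) :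
    m (τ j) = m j ∧ n (τ j) = n j := by
  have hrank (j : Fin ℓ) := rank_blockComponent hφ hτ (i := τ j) rfl
  have hm_le (j : Fin ℓ) : m j ≤ m (τ j) := by
    have : Nonempty (Fin (n j)) := ⟨⟨0, hn j⟩⟩
    simpa [hnm (τ j)] using Matrix.card_le_max_of_rank_map_eq (hrank j)
  have hm_eq := τ.apply_eq_of_forall_le hm_le
  have hn_le (j : Fin ℓ) : n j ≤ n (τ j) := by
    have := Matrix.card_mul_card_le_of_rank_map_eq (hrank j)
    simp only [Fintype.card_fin, hm_eq] at this
    exact Nat.le_of_mul_le_mul_left this (hm j)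
  exact ⟨hm_eq j, τ.apply_eq_of_forall_le hn_le j⟩

end SumRank

theorem statement12_general
    (F : Type) [Field F]
    (ℓ : ℕ) (m n : Fin ℓ → ℕ)
    (hm : ∀ i, 1 ≤ m i) (hn : ∀ i, 1 ≤ n i)
    (hnm : ∀ i, n i ≤ m i)
    (φ : (∀ i, Matrix (Fin (m i)) (Fin (n i)) F) →ₗ[F]
         (∀ i, Matrix (Fin (m i)) (Fin (n i)) F))
    (hφ : ∀ C, srk (φ C) = srk C) :
    ∃ (σ : Equiv.Perm (Fin ℓ)) (hm' : ∀ i, m (σ i) = m i) (hn' : ∀ i, n (σ i) = n i)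
      (ψ : ∀ i, Matrix (Fin (m i)) (Fin (n i)) F →ₗ[F] Matrix (Fin (m i)) (Fin (n i)) F),
      (∀ i A, (ψ i A).rank = A.rank) ∧
      ∀ C : (∀ i, Matrix (Fin (m i)) (Fin (n i)) F), ∀ i,
        φ C i = ψ i (Matrix.reindex (finCongr (hm' i)) (finCongr (hn' i)) (C (σ i))) := by
  obtain ⟨τ, hτ⟩ := exists_perm_block_target hm hn hφ
  have hm' (i : Fin ℓ) : m (τ.symm i) = m i := by
    simpa using (sizes_eq_of_block_target hm hn hnm hφ hτ (τ.symm i)).1.symm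
  have hn' (i : Fin ℓ) : n (τ.symm i) = n i := by
    simpa using (sizes_eq_of_block_target hm hn hnm hφ hτ (τ.symm i)).2.symm
  let e (i : Fin ℓ) := reindexLinearEquiv F F (finCongr (hm' i)) (finCongr (hn' i))
  refine ⟨τ.symm, hm', hn', fun i => blockComponent φ i (τ.symm i) ∘ₗ (e i).symm.toLinearMap,
    fun i A => rank_blockComponent hφ hτ (τ.apply_symm_apply i) _ |>.trans ?_, fun C i => ?_⟩
  · simp [e]
  · rw [LinearMap.apply_eq_sum_single φ C, Finset.sum_apply, Finset.sum_eq_single (τ.symm i)]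
    · change _ = blockComponent φ i (τ.symm i) ((e i).symm (e i (C (τ.symm i))))
      rw [LinearEquiv.symm_apply_apply, blockComponent_apply]
    · intro j _ hj
      exact map_single_apply_eq_zero hτ (by rintro rfl; simp at hj) _
    · simp

/-- **Characterization of linear sum-rank isometries**: every linear map preserving
the sum-rank weight is obtained by permuting the blocks (preserving the block sizes)
and applying a linear rank-preserving map on each block. -/
theorem statement12 (q : ℕ) (hq : IsPrimePow q)
    (F : Type) [Field F] [Fintype F] (hF : Fintype.card F = q)
    (ℓ : ℕ) (hℓ : 1 ≤ ℓ) (m n : Fin ℓ → ℕ)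
    (hm : ∀ i, 1 ≤ m i) (hn : ∀ i, 1 ≤ n i)
    (hmon : Antitone m) (hnm : ∀ i, n i ≤ m i)
    (φ : (∀ i, Matrix (Fin (m i)) (Fin (n i)) F) →ₗ[F]
         (∀ i, Matrix (Fin (m i)) (Fin (n i)) F))
    (hφ : ∀ C, srk (φ C) = srk C) :
    ∃ (σ : Equiv.Perm (Fin ℓ)) (hm' : ∀ i, m (σ i) = m i) (hn' : ∀ i, n (σ i) = n i)
      (ψ : ∀ i, Matrix (Fin (m i)) (Fin (n i)) F →ₗ[F] Matrix (Fin (m i)) (Fin (n i)) F),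
      (∀ i A, (ψ i A).rank = A.rank) ∧
      ∀ C : (∀ i, Matrix (Fin (m i)) (Fin (n i)) F), ∀ i,
        φ C i = ψ i (Matrix.reindex (finCongr (hm' i)) (finCongr (hn' i)) (C (σ i))) :=
  statement12_general F ℓ m n hm hn hnm φ hφ
end

section
/- (Singleton Bound via generalized weights.) Let 0 ≠ 𝒞 ⊆ 𝕄 be a code and let r ∈ {1,…,dim(𝒞)}. Let j ∈ [ℓ] and 0 ≤ δ ≤ n_j−1 be such that d_r(𝒞) − 1 ≥ n_1 + … + n_{j−1} + δ. Then dim(𝒞) ≤ ∑_{i=j}^ℓ m_i n_i − m_j δ + r − 1. -/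
/-!
Choose `c i = n i` for `i < j`, `c j = δ` and `c i = 0` for `i > j`, and let `𝒜` be the product of
the spaces of `m i × n i` matrices supported on their first `c i` columns. Each factor is an optimal
anticode of maximum rank `c i`, so `maxsrk 𝒜 ≤ ∑ c i < d_r(𝒞)`, which by the definition of `d_r`
forces `dim (𝒞 ∩ 𝒜) < r`. Since `dim 𝒞 + dim 𝒜 - dim (𝒞 ∩ 𝒜) ≤ dim 𝕄 = ∑ m i n i` and
`dim 𝒜 = ∑_{i<j} m i n i + m j δ`, the bound follows.
-/

open Matrix

/-- The minimum sum-rank distance of a code. -/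
noncomputable def minDist {F : Type} [Field F] {ℓ : ℕ} {m n : Fin ℓ → ℕ}
    (𝒞 : Submodule F (∀ i, Matrix (Fin (m i)) (Fin (n i)) F)) : ℕ :=
  sInf {k | ∃ C ∈ 𝒞, C ≠ 0 ∧ srk C = k}

/-- A linear space of `a × b` matrices is an optimal rank-metric anticode if its
dimension equals `a` times its maximum rank. -/
def IsOptRankAnticode {F : Type} [Field F] {a b : ℕ}
    (𝒜 : Submodule F (Matrix (Fin a) (Fin b) F)) : Prop :=
  Module.finrank F 𝒜 = a * maxrk 𝒜

/-- The `r`-th generalized sum-rank weight of a code. -/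
noncomputable def genWeight {F : Type} [Field F] {ℓ : ℕ} {m n : Fin ℓ → ℕ}
    (𝒞 : Submodule F (∀ i, Matrix (Fin (m i)) (Fin (n i)) F)) (r : ℕ) : ℕ :=
  sInf {w | ∃ 𝒜 : ∀ i, Submodule F (Matrix (Fin (m i)) (Fin (n i)) F),
    (∀ i, IsOptRankAnticode (𝒜 i)) ∧
    r ≤ Module.finrank F ↥(𝒞 ⊓ Submodule.pi Set.univ 𝒜) ∧
    maxsrk (Submodule.pi Set.univ 𝒜) = w}

open Finset

theorem Matrix.card_le_rank_of_mul_mul_eq_one {R : Type*} [CommSemiring R] [StrongRankCondition R]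
    {k a b : Type*} [Fintype k] [DecidableEq k] [Fintype a] [Fintype b]
    {L : Matrix k a R} {A : Matrix a b R} {B : Matrix b k R} (h : L * A * B = 1) :
    Fintype.card k ≤ A.rank := by
  rw [← rank_one (R := R) (n := k), ← h]
  exact (rank_mul_le_left _ _).trans (rank_mul_le_right _ _)

theorem Matrix.one_submatrix_mul_transpose {R : Type*} [NonAssocSemiring R] {k b : Type*}
    [Fintype b] [DecidableEq b] [DecidableEq k] (e : k ↪ b) :
    (1 : Matrix b b R).submatrix e id * ((1 : Matrix b b R).submatrix e id)ᵀ = 1 := by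
  rw [transpose_submatrix, transpose_one, ← submatrix_mul _ _ _ _ _ Function.bijective_id,
    Matrix.one_mul, submatrix_one_embedding]

theorem Submodule.pi_univ_range {R ι : Type*} [Semiring R] {φ ψ : ι → Type*}
    [∀ i, AddCommMonoid (φ i)] [∀ i, Module R (φ i)]
    [∀ i, AddCommMonoid (ψ i)] [∀ i, Module R (ψ i)] (g : ∀ i, φ i →ₗ[R] ψ i) :
    Submodule.pi Set.univ (fun i => LinearMap.range (g i)) =
      LinearMap.range (LinearMap.piMap g) := by
  ext x
  simp only [Submodule.mem_pi, Set.mem_univ, true_implies, LinearMap.mem_range,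
    LinearMap.coe_piMap]
  constructor
  · intro h
    choose y hy using h
    exact ⟨y, funext hy⟩
  · rintro ⟨y, rfl⟩ i
    exact ⟨y i, rfl⟩

theorem Finset.sum_Iio_add_sum_Ici {ι M : Type*} [Fintype ι] [LinearOrder ι]
    [LocallyFiniteOrderBot ι] [LocallyFiniteOrderTop ι] [AddCommMonoid M] (j : ι) (f : ι → M) :
    ∑ i ∈ Iio j, f i + ∑ i ∈ Ici j, f i = ∑ i, f i := by
  rw [← sum_filter_add_sum_filter_not univ (· < j)]
  simp only [not_lt, filter_gt_eq_Iio, filter_le_eq_Ici]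

theorem Finset.sum_ite_lt_ite_eq {ι M : Type*} [Fintype ι] [LinearOrder ι]
    [LocallyFiniteOrderBot ι] [AddCommMonoid M] (j : ι) (f : ι → M) (d : M) :
    ∑ i, (if i < j then f i else if i = j then d else 0) = ∑ i ∈ Iio j, f i + d := by
  rw [sum_ite, filter_gt_eq_Iio, sum_ite_eq']
  simp

section FirstColumns

variable (F : Type) [Field F] (a : ℕ) {b c : ℕ}

/-- The `c × b` matrix `[I_c | 0]`. -/
def truncSelect (h : c ≤ b) : Matrix (Fin c) (Fin b) F :=
  (1 : Matrix (Fin b) (Fin b) F).submatrix (Fin.castLE h) id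

/-- Matrices supported on the first `c` columns, written as the products `N * [I_c | 0]`. -/
def firstColumns (h : c ≤ b) : Submodule F (Matrix (Fin a) (Fin b) F) :=
  LinearMap.range (mulRightLinearMap (Fin a) F (truncSelect F h))

variable {F a}

theorem truncSelect_mul_transpose (h : c ≤ b) : truncSelect F h * (truncSelect F h)ᵀ = 1 :=
  one_submatrix_mul_transpose (Fin.castLEEmb h)

theorem mulRight_truncSelect_injective (h : c ≤ b) :
    Function.Injective (mulRightLinearMap (Fin a) F (truncSelect F h)) := by
  intro N N' hNN'
  have := congrArg (· * (truncSelect F h)ᵀ) hNN'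
  simpa only [mulRightLinearMap_apply, Matrix.mul_assoc, truncSelect_mul_transpose,
    Matrix.mul_one] using this

theorem rank_le_of_mem_firstColumns {h : c ≤ b} {M : Matrix (Fin a) (Fin b) F}
    (hM : M ∈ firstColumns F a h) : M.rank ≤ c := by
  obtain ⟨N, rfl⟩ := hM
  exact (rank_mul_le_left N (truncSelect F h)).trans (rank_le_width N)

theorem finrank_firstColumns (h : c ≤ b) : Module.finrank F (firstColumns F a h) = a * c := by
  rw [firstColumns, LinearMap.finrank_range_of_inj (mulRight_truncSelect_injective h),
    Module.finrank_matrix, Fintype.card_fin, Fintype.card_fin, Module.finrank_self, mul_one]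

theorem maxrk_firstColumns (hca : c ≤ a) (hcb : c ≤ b) : maxrk (firstColumns F a hcb) = c := by
  refine IsGreatest.csSup_eq ⟨⟨(truncSelect F hca)ᵀ * truncSelect F hcb, ⟨_, rfl⟩, ?_⟩, ?_⟩
  · refine le_antisymm (rank_le_of_mem_firstColumns ⟨_, rfl⟩) ?_
    have hsandwich : truncSelect F hca * ((truncSelect F hca)ᵀ * truncSelect F hcb) *
        (truncSelect F hcb)ᵀ = 1 := by
      rw [← Matrix.mul_assoc, truncSelect_mul_transpose, Matrix.one_mul,
        truncSelect_mul_transpose]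
    simpa using card_le_rank_of_mul_mul_eq_one hsandwich
  · rintro k ⟨M, hM, rfl⟩
    exact rank_le_of_mem_firstColumns hM

theorem isOptRankAnticode_firstColumns (hca : c ≤ a) (hcb : c ≤ b) :
    IsOptRankAnticode (firstColumns F a hcb) := by
  rw [IsOptRankAnticode, finrank_firstColumns, maxrk_firstColumns hca]

end FirstColumns

section SumRank

variable {F : Type} [Field F] {ℓ : ℕ} {m n c : Fin ℓ → ℕ}

variable (F m) in
def firstColumnsPi (hcn : ∀ i, c i ≤ n i) : Submodule F (∀ i, Matrix (Fin (m i)) (Fin (n i)) F) :=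
  Submodule.pi Set.univ fun i => firstColumns F (m i) (hcn i)

theorem maxsrk_firstColumnsPi_le (hcn : ∀ i, c i ≤ n i) :
    maxsrk (firstColumnsPi F m hcn) ≤ ∑ i, c i := by
  refine csSup_le ⟨0, 0, zero_mem _, by simp [srk]⟩ ?_
  rintro k ⟨C, hC, rfl⟩
  exact sum_le_sum fun i _ => rank_le_of_mem_firstColumns (hC i trivial)

theorem finrank_firstColumnsPi (hcn : ∀ i, c i ≤ n i) :
    Module.finrank F (firstColumnsPi F m hcn) = ∑ i, m i * c i := by
  rw [(LinearEquiv.ofEq (firstColumnsPi F m hcn) _ (Submodule.pi_univ_range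
      fun i => mulRightLinearMap (Fin (m i)) F (truncSelect F (hcn i)))).finrank_eq,
    LinearMap.finrank_range_of_inj
      (Function.Injective.piMap fun i => mulRight_truncSelect_injective (hcn i)),
    Module.finrank_pi_fintype]
  simp [Module.finrank_matrix]

theorem finrank_pi_matrix_fin :
    Module.finrank F (∀ i, Matrix (Fin (m i)) (Fin (n i)) F) = ∑ i, m i * n i := by
  simp [Module.finrank_pi_fintype, Module.finrank_matrix]

theorem genWeight_le_sum_of_le_finrank_inf
    {𝒞 : Submodule F (∀ i, Matrix (Fin (m i)) (Fin (n i)) F)} {r : ℕ} (hcn : ∀ i, c i ≤ n i) (hcm : ∀ i, c i ≤ m i)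
    (hr : r ≤ Module.finrank F ↥(𝒞 ⊓ firstColumnsPi F m hcn)) :
    genWeight 𝒞 r ≤ ∑ i, c i := by
  refine (Nat.sInf_le ?_).trans (maxsrk_firstColumnsPi_le (F := F) (m := m) hcn)
  exact ⟨_, fun i => isOptRankAnticode_firstColumns (hcm i) (hcn i), hr, rfl⟩

theorem finrank_add_sum_lt_of_sum_lt_genWeight
    (𝒞 : Submodule F (∀ i, Matrix (Fin (m i)) (Fin (n i)) F)) (r : ℕ)
    (hcn : ∀ i, c i ≤ n i) (hcm : ∀ i, c i ≤ m i) (hw : ∑ i, c i < genWeight 𝒞 r) :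
    Module.finrank F 𝒞 + ∑ i, m i * c i < ∑ i, m i * n i + r := by
  have hinf : Module.finrank F ↥(𝒞 ⊓ firstColumnsPi F m hcn) < r := by
    by_contra! h
    exact hw.not_ge (genWeight_le_sum_of_le_finrank_inf hcn hcm h)
  have hsup := Submodule.finrank_le (𝒞 ⊔ firstColumnsPi F m hcn)
  have hdim := Submodule.finrank_sup_add_finrank_inf_eq 𝒞 (firstColumnsPi F m hcn)
  rw [finrank_pi_matrix_fin] at hsup
  rw [finrank_firstColumnsPi] at hdim
  omega

end SumRank

theorem statement16_general
    (F : Type) [Field F]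
    (ℓ : ℕ) (m n : Fin ℓ → ℕ)
    (hnm : ∀ i, n i ≤ m i)
    (𝒞 : Submodule F (∀ i, Matrix (Fin (m i)) (Fin (n i)) F))
    (r : ℕ)
    (j : Fin ℓ) (δ : ℕ) (hδ : δ < n j)
    (hd : (∑ i ∈ Finset.Iio j, n i) + δ + 1 ≤ genWeight 𝒞 r) :
    Module.finrank F 𝒞 ≤ (∑ i ∈ Finset.Ici j, m i * n i) - m j * δ + r - 1 := by
  set c : Fin ℓ → ℕ := fun i => if i < j then n i else if i = j then δ else 0
  have hcn : ∀ i, c i ≤ n i := by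
    intro i
    dsimp only [c]
    split_ifs with hlt heq
    · rfl
    · exact heq ▸ hδ.le
    · exact Nat.zero_le _
  have hmc : ∀ i, m i * c i = if i < j then m i * n i else if i = j then m j * δ else 0 := by
    intro i
    dsimp only [c]
    split_ifs with hlt heq
    · rfl
    · rw [heq]
    · rw [mul_zero]
  have hbound := finrank_add_sum_lt_of_sum_lt_genWeight 𝒞 r hcn (fun i => (hcn i).trans (hnm i))
    (by rw [sum_ite_lt_ite_eq]; omega)
  rw [sum_congr rfl fun i _ => hmc i, sum_ite_lt_ite_eq, ← sum_Iio_add_sum_Ici j] at hbound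
  omega

/-- **Singleton Bound via generalized weights.** -/
theorem statement16 (q : ℕ) (hq : IsPrimePow q)
    (F : Type) [Field F] [Fintype F] (hF : Fintype.card F = q)
    (ℓ : ℕ) (hℓ : 1 ≤ ℓ) (m n : Fin ℓ → ℕ)
    (hm : ∀ i, 1 ≤ m i) (hn : ∀ i, 1 ≤ n i)
    (hmon : Antitone m) (hnm : ∀ i, n i ≤ m i)
    (𝒞 : Submodule F (∀ i, Matrix (Fin (m i)) (Fin (n i)) F)) (h0 : 𝒞 ≠ ⊥)
    (r : ℕ) (hr1 : 1 ≤ r) (hr2 : r ≤ Module.finrank F 𝒞)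
    (j : Fin ℓ) (δ : ℕ) (hδ : δ < n j)
    (hd : (∑ i ∈ Finset.Iio j, n i) + δ + 1 ≤ genWeight 𝒞 r) :
    Module.finrank F 𝒞 ≤ (∑ i ∈ Finset.Ici j, m i * n i) - m j * δ + r - 1 :=
  statement16_general F ℓ m n hnm 𝒞 r j δ hδ hd
end
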